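/- arXiv:1307.6514 — 6 statements merged into one kernel-verified Lean document; each statement's English description precedes it below -/
import Mathlib

section
/- A top Δ (a lattice polytope with one facet through the origin being a (k-1)-dimensional reflexive polytope in the hyperplane x_k = 0, lying in the half-space x_k ≥ 0, with all other facets of the form n · x = -1 for lattice points n) is a short top (all lattice points in the summit x_k ≥ 1 lie in the hyperplane x_k = 1) if and only if its polar dual Δ° contains the point (0, …, 0, -1). -/
open Finset Matrix Pointwise
open scoped Classical

noncomputable section

namespace SemistableTops

/-- A point of `ℝ^k` with all integer coordinates. -/
def IsLatticePt {k : ℕ} (x : Fin k → ℝ) : Prop := ∀ i, ∃ n : ℤ, x i = (n : ℝ)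

/-- The lattice points lying in a subset of `ℝ^k`. -/
def latticePts {k : ℕ} (S : Set (Fin k → ℝ)) : Set (Fin k → ℝ) := {x ∈ S | IsLatticePt x}

/-- The polar dual `{y : x ⬝ y ≥ -1 for all x ∈ S}`. -/
def polarDual {k : ℕ} (S : Set (Fin k → ℝ)) : Set (Fin k → ℝ) :=
  {y | ∀ x ∈ S, -1 ≤ ∑ i, x i * y i}

/-- A lattice polytope: the convex hull of finitely many lattice points. -/
def IsLatticePolytope {k : ℕ} (S : Set (Fin k → ℝ)) : Prop :=
  ∃ V : Finset (Fin k → ℝ), (∀ v ∈ V, IsLatticePt v) ∧ S = convexHull ℝ (V : Set (Fin k → ℝ))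

/-- A reflexive polytope: a lattice polytope containing the origin whose polar dual is
again a lattice polytope. -/
def IsReflexive {k : ℕ} (S : Set (Fin k → ℝ)) : Prop :=
  IsLatticePolytope S ∧ (0 : Fin k → ℝ) ∈ S ∧ IsLatticePolytope (polarDual S)

/-- `F` is a `d`-dimensional exposed face of `P`, cut out by a supporting hyperplane. -/
def IsFace {k : ℕ} (P F : Set (Fin k → ℝ)) (d : ℕ) : Prop :=
  ∃ (n : Fin k → ℝ) (c : ℝ), n ≠ 0 ∧ (∀ x ∈ P, c ≤ ∑ i, n i * x i) ∧
    F = {x ∈ P | ∑ i, n i * x i = c} ∧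
    Module.finrank ℝ (affineSpan ℝ F).direction = d

/-- Forget the last coordinate. -/
def projInit {k : ℕ} (x : Fin (k+1) → ℝ) : Fin k → ℝ := fun i => x i.castSucc

/-- The last coordinate. -/
def lastCoord {k : ℕ} (x : Fin (k+1) → ℝ) : ℝ := x (Fin.last k)

/-- The point `(0, …, 0, -1)`. -/
def negE (k : ℕ) : Fin (k+1) → ℝ := fun i => if i = Fin.last k then -1 else 0

/-- A `(k+1)`-dimensional top: a lattice polytope in the half-space `x_{k+1} ≥ 0`, whose
facet in the hyperplane `x_{k+1} = 0` is a `k`-dimensional reflexive polytope, and whose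
other facets lie on hyperplanes `n ⬝ x = -1` with `n` a lattice point. -/
structure IsTopPoly {k : ℕ} (Δ : Set (Fin (k+1) → ℝ)) : Prop where
  poly : IsLatticePolytope Δ
  halfspace : ∀ x ∈ Δ, 0 ≤ lastCoord x
  facets : ∃ N : Finset (Fin (k+1) → ℝ), (∀ n ∈ N, IsLatticePt n) ∧
      Δ = {x | 0 ≤ lastCoord x} ∩ ⋂ n ∈ N, {x | -1 ≤ ∑ i, n i * x i}
  reflexive_boundary : IsReflexive (projInit '' (Δ ∩ {x | lastCoord x = 0}))

/-- The summit of a top: its intersection with the half-space `x_{k+1} ≥ 1`. -/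
def summit {k : ℕ} (Δ : Set (Fin (k+1) → ℝ)) : Set (Fin (k+1) → ℝ) :=
  Δ ∩ {x | 1 ≤ lastCoord x}

/-- A short top: a top all of whose summit lattice points lie at height `1`. -/
def IsShortTop {k : ℕ} (Δ : Set (Fin (k+1) → ℝ)) : Prop :=
  IsTopPoly Δ ∧ ∀ x ∈ latticePts (summit Δ), lastCoord x = 1

/-- A lattice-preserving linear isomorphism of `ℝ^k` (an element of `GL_k(ℤ)`). -/
def UnimodularMap {k : ℕ} (φ : (Fin k → ℝ) → (Fin k → ℝ)) : Prop :=
  ∃ M : Matrix (Fin k) (Fin k) ℤ, IsUnit M.det ∧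
    ∀ x, φ x = (M.map (fun z : ℤ => (z : ℝ))).mulVec x

/-- The vertical ray `{t • e_{k+1} : t ≥ 0}`. -/
def upRay (n : ℕ) : Set (Fin (n+1) → ℝ) :=
  {x | ∃ t : ℝ, 0 ≤ t ∧ x = fun i => if i = Fin.last n then t else 0}

/-- A top `Δ` is a short top if and only if its polar dual contains the
point `(0, …, 0, -1)`. -/
theorem stmt1 {k : ℕ} (Δ : Set (Fin (k+1) → ℝ)) (h : IsTopPoly Δ) :
    IsShortTop Δ ↔ negE k ∈ polarDual Δ := by
  have key : ∀ y : Fin (k+1) → ℝ, ∑ i, y i * negE k i = -(lastCoord y) := by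
    intro y
    have h1 : ∀ i ∈ Finset.univ, y i * negE k i =
        if i = Fin.last k then -(y (Fin.last k)) else 0 := by
      intro i _
      by_cases hi : i = Fin.last k
      · subst hi; simp [negE]
      · simp [negE, hi]
    rw [Finset.sum_congr rfl h1, Finset.sum_ite_eq' Finset.univ (Fin.last k)]
    simp [lastCoord]
  constructor
  · rintro ⟨_, hshort⟩
    intro x hx
    rw [key]
    obtain ⟨V, hVlat, hV⟩ := h.poly
    have hsub : Δ ⊆ {y : Fin (k+1) → ℝ | y (Fin.last k) ≤ 1} := by
      rw [hV]
      apply convexHull_min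
      · intro v hv
        have hvΔ : v ∈ Δ := by rw [hV]; exact subset_convexHull ℝ _ hv
        by_cases h1 : 1 ≤ lastCoord v
        · have := hshort v ⟨⟨hvΔ, h1⟩, hVlat v hv⟩
          simpa [lastCoord] using this.le
        · exact le_of_lt (lt_of_not_ge h1)
      · exact convex_halfSpace_le ⟨fun a b => rfl, fun c a => rfl⟩ 1
    have := hsub hx
    simp only [Set.mem_setOf_eq] at this
    simp only [lastCoord]
    linarith
  · intro hdual
    refine ⟨h, ?_⟩
    rintro x ⟨⟨hxΔ, hx1⟩, _⟩
    have := hdual x hxΔ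
    rw [key] at this
    have hx1' : (1:ℝ) ≤ lastCoord x := hx1
    linarith

end SemistableTops
end
end

section
/- Let Δ be a short top. The summit of Δ (the intersection with x_k ≥ 1) is itself a facet of Δ if and only if (0, …, 0, -1) is a vertex of the polar dual Δ°. -/
open Finset Matrix Pointwise
open scoped Classical

noncomputable section

namespace SemistableTops

/-- The dot-product-with-`u` linear functional `x ↦ ∑ i, u i * x i`. -/
private def dotL {m : ℕ} (u : Fin m → ℝ) : (Fin m → ℝ) →ₗ[ℝ] ℝ :=
  ∑ i, u i • LinearMap.proj i

private lemma dotL_apply {m : ℕ} (u x : Fin m → ℝ) : dotL u x = ∑ i, u i * x i := by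
  simp [dotL]

private lemma dot_comm {m : ℕ} (u x : Fin m → ℝ) : ∑ i, u i * x i = ∑ i, x i * u i :=
  Finset.sum_congr rfl fun i _ => mul_comm _ _

/-- The last-coordinate linear functional. -/
private def lastL (k : ℕ) : (Fin (k+1) → ℝ) →ₗ[ℝ] ℝ := LinearMap.proj (Fin.last k)

private lemma lastL_apply {k : ℕ} (x : Fin (k+1) → ℝ) : lastL k x = lastCoord x := rfl

private lemma sum_negE {k : ℕ} (x : Fin (k+1) → ℝ) :
    ∑ i, x i * negE k i = -(lastCoord x) := by
  simp [negE, mul_ite, lastCoord]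

private lemma sum_negE' {k : ℕ} (x : Fin (k+1) → ℝ) :
    ∑ i, negE k i * x i = -(lastCoord x) := by
  rw [dot_comm]; exact sum_negE x

private lemma dual_mem_iff {m : ℕ} (V : Finset (Fin m → ℝ)) (y : Fin m → ℝ) :
    y ∈ polarDual (convexHull ℝ (V : Set (Fin m → ℝ))) ↔ ∀ v ∈ V, -1 ≤ ∑ i, v i * y i := by
  constructor
  · exact fun hy v hv => hy v (subset_convexHull ℝ _ hv)
  · intro hv x hx
    have hconv : Convex ℝ {x : Fin m → ℝ | -1 ≤ dotL y x} :=
      convex_halfSpace_ge (dotL y).isLinear (-1)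
    have hsub : convexHull ℝ (V : Set (Fin m → ℝ)) ⊆ {x : Fin m → ℝ | -1 ≤ dotL y x} := by
      apply convexHull_min _ hconv
      intro v hvV
      show -1 ≤ dotL y v
      rw [dotL_apply, dot_comm]
      exact hv v hvV
    have := hsub hx
    rw [Set.mem_setOf_eq, dotL_apply, dot_comm] at this
    exact this

set_option maxHeartbeats 2000000

/-- For a short top `Δ`, the summit is a facet of `Δ` if and only if
`(0, …, 0, -1)` is a vertex (extreme point) of the polar dual `Δ°`. -/

theorem stmt3 {k : ℕ} (Δ : Set (Fin (k+1) → ℝ)) (h : IsShortTop Δ) :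
    IsFace Δ (summit Δ) k ↔ negE k ∈ Set.extremePoints ℝ (polarDual Δ) := by
  classical
  obtain ⟨htop, hshort⟩ := h
  obtain ⟨V, hVlat, hΔ⟩ := htop.poly
  have hVΔ : (V : Set (Fin (k+1) → ℝ)) ⊆ Δ := hΔ ▸ subset_convexHull ℝ _
  -- every vertex has height 0 or 1
  have hv01 : ∀ v ∈ V, lastCoord v = 0 ∨ lastCoord v = 1 := by
    intro v hv
    obtain ⟨n, hn⟩ := hVlat v hv (Fin.last k)
    have h0 : 0 ≤ lastCoord v := htop.halfspace v (hVΔ hv)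
    rcases eq_or_lt_of_le h0 with he | hlt
    · exact Or.inl he.symm
    · refine Or.inr (hshort v ⟨⟨hVΔ hv, ?_⟩, hVlat v hv⟩)
      have hlt' : (0:ℝ) < (n:ℝ) := by
        rwa [show lastCoord v = v (Fin.last k) from rfl, hn] at hlt
      have h1n : (1:ℤ) ≤ n := by exact_mod_cast hlt'
      show (1:ℝ) ≤ lastCoord v
      rw [show lastCoord v = v (Fin.last k) from rfl, hn]
      exact_mod_cast h1n
  -- every point of Δ has height at most 1
  have hle1 : ∀ x ∈ Δ, lastCoord x ≤ 1 := by
    intro x hx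
    have hsub : Δ ⊆ {x : Fin (k+1) → ℝ | lastL k x ≤ 1} := by
      rw [hΔ]
      refine convexHull_min ?_ (convex_halfSpace_le (lastL k).isLinear 1)
      intro v hv
      show lastL k v ≤ 1
      rw [lastL_apply]
      rcases hv01 v hv with h | h <;> rw [h] <;> norm_num
    exact hsub hx
  have hsummit_eq : summit Δ = {x ∈ Δ | lastCoord x = 1} := by
    ext x
    constructor
    · rintro ⟨hxΔ, hx1⟩
      exact ⟨hxΔ, le_antisymm (hle1 x hxΔ) hx1⟩
    · rintro ⟨hxΔ, hx1⟩
      exact ⟨hxΔ, hx1.ge⟩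
  set V₁ : Finset (Fin (k+1) → ℝ) := V.filter (fun v => lastCoord v = 1) with hV₁def
  have hV₁sub : V₁ ⊆ V := Finset.filter_subset _ _
  have hV₁lc : ∀ v ∈ V₁, lastCoord v = 1 := fun v hv => (Finset.mem_filter.mp hv).2
  -- the summit is the convex hull of the height-one vertices
  have hsummithull : summit Δ = convexHull ℝ (V₁ : Set (Fin (k+1) → ℝ)) := by
    apply Set.Subset.antisymm
    · intro x hx
      rw [hsummit_eq] at hx
      obtain ⟨hxΔ, hx1⟩ := hx
      have hxhull : x ∈ convexHull ℝ (V : Set (Fin (k+1) → ℝ)) := hΔ ▸ hxΔ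
      rw [Finset.convexHull_eq] at hxhull
      obtain ⟨w, hw0, hw1, hwx⟩ := hxhull
      have hxsum : x = ∑ v ∈ V, w v • v := by
        rw [← hwx, Finset.centerMass_eq_of_sum_1 _ _ hw1]
        simp
      have hlast : ∑ v ∈ V, w v * v (Fin.last k) = 1 := by
        have hx1' : x (Fin.last k) = 1 := hx1
        rw [hxsum] at hx1'
        rw [← hx1']
        simp [Finset.sum_apply]
      have hzsum : ∑ v ∈ V, w v * (1 - v (Fin.last k)) = 0 := by
        have : ∑ v ∈ V, w v * (1 - v (Fin.last k)) =
            (∑ v ∈ V, w v) - ∑ v ∈ V, w v * v (Fin.last k) := by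
          rw [← Finset.sum_sub_distrib]
          exact Finset.sum_congr rfl fun v _ => by ring
        rw [this, hw1, hlast, sub_self]
      have hzero : ∀ v ∈ V, w v * (1 - v (Fin.last k)) = 0 := by
        refine (Finset.sum_eq_zero_iff_of_nonneg ?_).mp hzsum
        intro v hv
        apply mul_nonneg (hw0 v hv)
        rcases hv01 v hv with h | h <;>
          rw [show v (Fin.last k) = lastCoord v from rfl, h] <;> norm_num
      have hwV₁ : ∀ v ∈ V, v ∉ V₁ → w v = 0 := by
        intro v hv hnv
        have hlc : lastCoord v = 0 := by
          rcases hv01 v hv with h | h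
          · exact h
          · exact absurd (Finset.mem_filter.mpr ⟨hv, h⟩) hnv
        have := hzero v hv
        rw [show v (Fin.last k) = lastCoord v from rfl, hlc] at this
        simpa using this
      have hsum1 : ∑ v ∈ V₁, w v = 1 := by
        rw [Finset.sum_subset hV₁sub (fun v hv hnv => hwV₁ v hv hnv), hw1]
      have hxsum1 : x = ∑ v ∈ V₁, w v • v := by
        rw [hxsum, Finset.sum_subset hV₁sub]
        intro v hv hnv
        rw [hwV₁ v hv hnv, zero_smul]
      rw [Finset.convexHull_eq]
      refine ⟨w, fun y hy => hw0 y (hV₁sub hy), hsum1, ?_⟩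
      rw [Finset.centerMass_eq_of_sum_1 _ _ hsum1]
      simp [← hxsum1]
    · apply convexHull_min
      · intro v hv
        have hv' : v ∈ V₁ := hv
        exact ⟨hVΔ (hV₁sub hv'), (hV₁lc v hv').ge⟩
      · exact Convex.inter (hΔ ▸ convex_convexHull ℝ _)
          (convex_halfSpace_ge (lastL k).isLinear 1)
  -- the summit is nonempty
  have hne : V₁.Nonempty := by
    obtain ⟨N, hNlat, hNrep⟩ := htop.facets
    set S : ℝ := ∑ n ∈ N, |n (Fin.last k)| with hSdef
    have hS0 : 0 ≤ S := Finset.sum_nonneg fun _ _ => abs_nonneg _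
    set ε : ℝ := (1 + S)⁻¹ with hεdef
    have hεpos : 0 < ε := inv_pos.mpr (by linarith)
    set xε : Fin (k+1) → ℝ := fun i => if i = Fin.last k then ε else 0 with hxεdef
    have hxεlast : lastCoord xε = ε := by simp [hxεdef, lastCoord]
    have hxε : xε ∈ Δ := by
      rw [hNrep]
      constructor
      · show 0 ≤ lastCoord xε
        rw [hxεlast]; exact hεpos.le
      · simp only [Set.mem_iInter]
        intro n hn
        show -1 ≤ ∑ i, n i * xε i
        have hsum : ∑ i, n i * xε i = n (Fin.last k) * ε := by
          simp [hxεdef, mul_ite]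
        rw [hsum]
        have habs : |n (Fin.last k) * ε| ≤ 1 := by
          rw [abs_mul, abs_of_pos hεpos]
          have hle : |n (Fin.last k)| ≤ S := by
            rw [hSdef]
            exact Finset.single_le_sum (f := fun n : Fin (k+1) → ℝ => |n (Fin.last k)|)
              (fun _ _ => abs_nonneg _) hn
          calc |n (Fin.last k)| * ε ≤ (1 + S) * ε :=
                mul_le_mul_of_nonneg_right (by linarith) hεpos.le
            _ = 1 := mul_inv_cancel₀ (by linarith)
        linarith [(abs_le.mp habs).1]
    by_contra hemp
    have hall0 : ∀ v ∈ V, lastCoord v = 0 := fun v hv =>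
      (hv01 v hv).resolve_right fun h1 => hemp ⟨v, Finset.mem_filter.mpr ⟨hv, h1⟩⟩
    have hsub : Δ ⊆ {x : Fin (k+1) → ℝ | lastL k x ≤ 0} := by
      rw [hΔ]
      refine convexHull_min ?_ (convex_halfSpace_le (lastL k).isLinear 0)
      intro v hv
      show lastL k v ≤ 0
      rw [lastL_apply, hall0 v hv]
    have := hsub hxε
    rw [Set.mem_setOf_eq, lastL_apply, hxεlast] at this
    linarith
  obtain ⟨p, hpV₁⟩ := hne
  have hp1 : lastCoord p = 1 := hV₁lc p hpV₁
  have hpne : p ≠ 0 := by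
    intro h0
    rw [h0] at hp1
    simp [lastCoord] at hp1
  -- the kernel of the last coordinate has dimension k
  have hker : Module.finrank ℝ (LinearMap.ker (lastL k)) = k := by
    have hsurj : Function.Surjective (lastL k) := fun r => ⟨fun _ => r, rfl⟩
    have hrange : LinearMap.range (lastL k) = ⊤ := LinearMap.range_eq_top.mpr hsurj
    have hrn := LinearMap.finrank_range_add_finrank_ker (lastL k)
    rw [hrange, finrank_top, Module.finrank_self, Module.finrank_fin_fun] at hrn
    omega
  have hWle : vectorSpan ℝ (V₁ : Set (Fin (k+1) → ℝ)) ≤ LinearMap.ker (lastL k) := by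
    rw [vectorSpan_def, Submodule.span_le]
    rintro w ⟨a, ha, b, hb, rfl⟩
    have ha1 : lastCoord a = 1 := hV₁lc a ha
    have hb1 : lastCoord b = 1 := hV₁lc b hb
    simp only [SetLike.mem_coe, LinearMap.mem_ker, vsub_eq_sub]
    show (a - b) (Fin.last k) = 0
    simp only [Pi.sub_apply]
    rw [show a (Fin.last k) = lastCoord a from rfl, show b (Fin.last k) = lastCoord b from rfl,
      ha1, hb1, sub_self]
  have hsup : Submodule.span ℝ (V₁ : Set (Fin (k+1) → ℝ)) =
      vectorSpan ℝ (V₁ : Set (Fin (k+1) → ℝ)) ⊔ (ℝ ∙ p) := by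
    apply le_antisymm
    · rw [Submodule.span_le]
      intro v hv
      have hrw : v = (v - p) + p := by abel
      rw [SetLike.mem_coe, hrw]
      refine Submodule.add_mem _ (Submodule.mem_sup_left ?_)
        (Submodule.mem_sup_right (Submodule.mem_span_singleton_self p))
      have := vsub_mem_vectorSpan ℝ hv (show p ∈ (V₁ : Set (Fin (k+1) → ℝ)) from hpV₁)
      rwa [vsub_eq_sub] at this
    · apply sup_le
      · rw [vectorSpan_def, Submodule.span_le]
        rintro w ⟨a, ha, b, hb, rfl⟩
        show a -ᵥ b ∈ (Submodule.span ℝ (V₁ : Set (Fin (k+1) → ℝ)) : Set (Fin (k+1) → ℝ))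
        rw [vsub_eq_sub]
        exact SetLike.mem_coe.mpr
          (Submodule.sub_mem _ (Submodule.subset_span ha) (Submodule.subset_span hb))
      · rw [Submodule.span_singleton_le_iff_mem]
        exact Submodule.subset_span (show p ∈ (V₁ : Set (Fin (k+1) → ℝ)) from hpV₁)
  -- span = ⊤ implies the summit has dimension k
  have hBb : Submodule.span ℝ (V₁ : Set (Fin (k+1) → ℝ)) = ⊤ →
      Module.finrank ℝ (vectorSpan ℝ (V₁ : Set (Fin (k+1) → ℝ))) = k := by
    intro hsp
    have hle : Module.finrank ℝ (vectorSpan ℝ (V₁ : Set (Fin (k+1) → ℝ))) ≤ k := by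
      exact le_trans (Submodule.finrank_mono hWle) (le_of_eq hker)
    have h1 : Module.finrank ℝ (ℝ ∙ p) = 1 := finrank_span_singleton hpne
    have htop' : Module.finrank ℝ
        (Submodule.span ℝ (V₁ : Set (Fin (k+1) → ℝ))) = k + 1 := by
      rw [hsp, finrank_top, Module.finrank_fin_fun]
    rw [hsup] at htop'
    have hsfe := Submodule.finrank_sup_add_finrank_inf_eq
      (vectorSpan ℝ (V₁ : Set (Fin (k+1) → ℝ))) (ℝ ∙ p)
    omega
  -- summit of dimension k implies span = ⊤
  have hBa : Module.finrank ℝ (vectorSpan ℝ (V₁ : Set (Fin (k+1) → ℝ))) = k →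
      Submodule.span ℝ (V₁ : Set (Fin (k+1) → ℝ)) = ⊤ := by
    intro hfW
    have hWker : vectorSpan ℝ (V₁ : Set (Fin (k+1) → ℝ)) = LinearMap.ker (lastL k) :=
      Submodule.eq_of_le_of_finrank_le hWle (by rw [hker, hfW])
    rw [hsup, hWker, eq_top_iff]
    rintro x -
    have hrw : x = (x - x (Fin.last k) • p) + x (Fin.last k) • p := by abel
    rw [hrw]
    refine Submodule.add_mem _ (Submodule.mem_sup_left ?_)
      (Submodule.mem_sup_right (Submodule.smul_mem _ _ (Submodule.mem_span_singleton_self p)))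
    rw [LinearMap.mem_ker]
    show (x - x (Fin.last k) • p) (Fin.last k) = 0
    have : p (Fin.last k) = 1 := hp1
    simp [this]
  have hdirEq : (affineSpan ℝ (summit Δ)).direction = vectorSpan ℝ (V₁ : Set (Fin (k+1) → ℝ)) := by
    rw [hsummithull, affineSpan_convexHull, direction_affineSpan]
  have hnegEmem : negE k ∈ polarDual Δ := by
    intro x hx
    rw [sum_negE]
    linarith [hle1 x hx]
  -- span = ⊤ implies negE is an extreme point
  have hC1 : Submodule.span ℝ (V₁ : Set (Fin (k+1) → ℝ)) = ⊤ →
      negE k ∈ Set.extremePoints ℝ (polarDual Δ) := by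
    intro hsp
    refine ⟨hnegEmem, fun y hy z hz hseg => ?_⟩
    obtain ⟨a, b, ha, hb, hab, habe⟩ := hseg
    have key : ∀ v ∈ V₁, (∑ i, v i * y i = -1) ∧ (∑ i, v i * z i = -1) := by
      intro v hv
      have hvV : v ∈ V := hV₁sub hv
      have hy' : -1 ≤ ∑ i, v i * y i := hy v (hVΔ hvV)
      have hz' : -1 ≤ ∑ i, v i * z i := hz v (hVΔ hvV)
      have hsum : a * (∑ i, v i * y i) + b * (∑ i, v i * z i) = -1 := by
        have hcomb : ∑ i, v i * (a • y + b • z) i =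
            a * (∑ i, v i * y i) + b * (∑ i, v i * z i) := by
          rw [Finset.mul_sum, Finset.mul_sum, ← Finset.sum_add_distrib]
          refine Finset.sum_congr rfl fun i _ => ?_
          simp only [Pi.add_apply, Pi.smul_apply, smul_eq_mul]
          ring
        rw [← hcomb, habe, sum_negE, hV₁lc v hv]
      have h3 : a * ((∑ i, v i * y i) + 1) + b * ((∑ i, v i * z i) + 1) = 0 := by
        linear_combination hsum + hab
      have h4 : 0 ≤ a * ((∑ i, v i * y i) + 1) := mul_nonneg ha.le (by linarith)
      have h5 : 0 ≤ b * ((∑ i, v i * z i) + 1) := mul_nonneg hb.le (by linarith)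
      have h6 : a * ((∑ i, v i * y i) + 1) = 0 := by linarith
      have h7 : b * ((∑ i, v i * z i) + 1) = 0 := by linarith
      constructor
      · have := (mul_eq_zero.mp h6).resolve_left ha.ne'
        linarith
      · have := (mul_eq_zero.mp h7).resolve_left hb.ne'
        linarith
    have heq : ∀ u : Fin (k+1) → ℝ, (∀ v ∈ V₁, ∑ i, v i * u i = -1) → u = negE k := by
      intro u hu
      have hkeru : (V₁ : Set (Fin (k+1) → ℝ)) ⊆
          (LinearMap.ker (dotL (u - negE k)) : Set (Fin (k+1) → ℝ)) := by
        intro v hv'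
        have hv : v ∈ V₁ := hv'
        simp only [SetLike.mem_coe, LinearMap.mem_ker, dotL_apply]
        have h1 := hu v hv
        have h2 : ∑ i, v i * negE k i = -1 := by
          rw [sum_negE, hV₁lc v hv]
        have h3 : ∑ i, (u - negE k) i * v i =
            (∑ i, v i * u i) - ∑ i, v i * negE k i := by
          rw [← Finset.sum_sub_distrib]
          refine Finset.sum_congr rfl fun i _ => ?_
          simp only [Pi.sub_apply]
          ring
        rw [h3, h1, h2, sub_self]
      have hkertop : LinearMap.ker (dotL (u - negE k)) = ⊤ := by
        rw [eq_top_iff, ← hsp]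
        exact Submodule.span_le.mpr hkeru
      have hg0 : dotL (u - negE k) = 0 := LinearMap.ker_eq_top.mp hkertop
      funext j
      have hj := LinearMap.congr_fun hg0 (Pi.single j 1)
      rw [dotL_apply] at hj
      simp only [Pi.single_apply, mul_ite, mul_one, mul_zero, Finset.sum_ite_eq,
        Finset.sum_ite_eq', Finset.mem_univ, if_true, LinearMap.zero_apply,
        Pi.sub_apply] at hj
      linarith
    exact heq y fun v hv => (key v hv).1
  -- negE extreme implies span = ⊤
  have hC2 : negE k ∈ Set.extremePoints ℝ (polarDual Δ) →
      Submodule.span ℝ (V₁ : Set (Fin (k+1) → ℝ)) = ⊤ := by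
    intro hext
    by_contra hne'
    obtain ⟨f, hf0, hfmap⟩ := Submodule.exists_dual_map_eq_bot_of_lt_top
      (p := Submodule.span ℝ (V₁ : Set (Fin (k+1) → ℝ))) (lt_top_iff_ne_top.mpr hne')
      inferInstance
    have hfV₁ : ∀ v ∈ V₁, f v = 0 := by
      intro v hv
      have hmem : f v ∈ Submodule.map f (Submodule.span ℝ (V₁ : Set (Fin (k+1) → ℝ))) :=
        Submodule.mem_map_of_mem (Submodule.subset_span hv)
      rw [hfmap] at hmem
      simpa using hmem
    set u : Fin (k+1) → ℝ := fun j => f (Pi.single j 1) with hu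
    have hfu : ∀ x : Fin (k+1) → ℝ, f x = ∑ i, x i * u i := by
      intro x
      rw [LinearMap.pi_apply_eq_sum_univ]
      simp only [hu, smul_eq_mul]
      refine Finset.sum_congr rfl fun i _ => ?_
      have hps : (fun j => if i = j then (1:ℝ) else 0) = Pi.single i 1 := by
        funext j
        simp [Pi.single_apply, eq_comm]
      rw [hps]
    have hune : u ≠ 0 := by
      intro h0
      apply hf0
      apply LinearMap.ext
      intro x
      rw [hfu, h0]
      simp
    set S : ℝ := ∑ v ∈ V, |f v| with hSdef
    have hS0 : 0 ≤ S := Finset.sum_nonneg fun _ _ => abs_nonneg _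
    set ε : ℝ := (1 + S)⁻¹ with hεdef
    have hεpos : 0 < ε := inv_pos.mpr (by linarith)
    have hmemσ : ∀ σ : ℝ, |σ| = ε → negE k + σ • u ∈ polarDual Δ := by
      intro σ hσ
      rw [hΔ, dual_mem_iff]
      intro v hv
      have hsum : ∑ i, v i * (negE k + σ • u) i = -(lastCoord v) + σ * f v := by
        have hsplit : ∑ i, v i * (negE k + σ • u) i =
            (∑ i, v i * negE k i) + σ * ∑ i, v i * u i := by
          rw [Finset.mul_sum, ← Finset.sum_add_distrib]
          refine Finset.sum_congr rfl fun i _ => ?_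
          simp only [Pi.add_apply, Pi.smul_apply, smul_eq_mul]
          ring
        rw [hsplit, sum_negE, hfu]
      rw [hsum]
      rcases hv01 v hv with h0 | h1
      · rw [h0]
        have habs : |σ * f v| ≤ 1 := by
          rw [abs_mul, hσ]
          have hle : |f v| ≤ S := by
            rw [hSdef]
            exact Finset.single_le_sum (f := fun v => |f v|) (fun _ _ => abs_nonneg _) hv
          calc ε * |f v| ≤ ε * (1 + S) := mul_le_mul_of_nonneg_left (by linarith) hεpos.le
            _ = 1 := inv_mul_cancel₀ (by linarith)
        linarith [(abs_le.mp habs).1]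
      · have hfv0 : f v = 0 := hfV₁ v (Finset.mem_filter.mpr ⟨hv, h1⟩)
        rw [h1, hfv0]
        norm_num
    have h1 := hmemσ ε (abs_of_pos hεpos)
    have h2 := hmemσ (-ε) (by rw [abs_neg]; exact abs_of_pos hεpos)
    have hseg : negE k ∈ openSegment ℝ (negE k + ε • u) (negE k + (-ε) • u) := by
      refine ⟨1/2, 1/2, by norm_num, by norm_num, by norm_num, ?_⟩
      module
    have hy := hext.2 h1 h2 hseg
    have hεu : ε • u = 0 := by
      have := congrArg (fun w => w - negE k) hy
      simpa using this
    exact hune ((smul_eq_zero.mp hεu).resolve_left hεpos.ne')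
  constructor
  · rintro ⟨n, c, hn0, hsupp, hF, hdim⟩
    rw [hdirEq] at hdim
    exact hC1 (hBa hdim)
  · intro hext
    have hfr : Module.finrank ℝ (vectorSpan ℝ (V₁ : Set (Fin (k+1) → ℝ))) = k := hBb (hC2 hext)
    refine ⟨negE k, -1, ?_, ?_, ?_, ?_⟩
    · intro h0
      have := congrFun h0 (Fin.last k)
      simp [negE] at this
    · intro x hx
      rw [sum_negE']
      linarith [hle1 x hx]
    · rw [hsummit_eq]
      ext x
      simp only [Set.mem_setOf_eq, sum_negE']
      constructor
      · rintro ⟨hxΔ, hx1⟩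
        exact ⟨hxΔ, by rw [hx1]⟩
      · rintro ⟨hxΔ, hx1⟩
        exact ⟨hxΔ, by linarith⟩
    · rw [hdirEq]
      exact hfr

end SemistableTops
end
end

section
/- Let Δ° be the (k-1)-dimensional standard reflexive simplex with vertices e_1, …, e_{k-1}, and (-1, …, -1). The polyhedron in ℝ^k with vertices (e_1, 0), …, (e_{k-1}, 0), and (-1, …, -1, -1) has exactly one bounded facet, and that facet lies on the hyperplane dual (under polar duality with pairing ≥ -1) to the lattice point (-1, -1, …, -1, k) ∈ ℤ^k. -/
open Finset Matrix Pointwise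
open scoped Classical

noncomputable section

namespace SemistableTops

/-- The `i`-th standard basis vector of `ℝ^n`. -/
def stdE {n : ℕ} (i : Fin n) : Fin n → ℝ := fun j => if j = i then 1 else 0

/-- The vertices `(e₁,0), …, (e_n,0), (-1,…,-1,-1)` of the dual top of the standard
simplex. -/
def simplexDualTopVerts (n : ℕ) : Set (Fin (n+1) → ℝ) :=
  (Set.range fun i : Fin n => (Fin.snoc (stdE i) 0 : Fin (n+1) → ℝ)) ∪
    {Fin.snoc (fun _ => -1) (-1)}


/-! ### Auxiliary material for the proof of `stmt6` -/

/-- The linear functional `x ↦ ∑ i, m i * x i`. -/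
def linFun {k : ℕ} (m : Fin k → ℝ) : (Fin k → ℝ) →ₗ[ℝ] ℝ where
  toFun x := ∑ i, m i * x i
  map_add' x y := by simp [mul_add, Finset.sum_add_distrib]
  map_smul' c x := by simp [Finset.mul_sum, mul_left_comm]

@[simp] lemma linFun_apply {k : ℕ} (m x : Fin k → ℝ) : linFun m x = ∑ i, m i * x i := rfl

def vtx (n : ℕ) (i : Fin n) : Fin (n+1) → ℝ := Fin.snoc (stdE i) 0
def wpt (n : ℕ) : Fin (n+1) → ℝ := Fin.snoc (fun _ => -1) (-1)
def nuv (n : ℕ) : Fin (n+1) → ℝ := Fin.snoc (fun _ => (-1:ℝ)) ((n : ℝ) + 1)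
def rayPt (n : ℕ) (t : ℝ) : Fin (n+1) → ℝ := fun i => if i = Fin.last n then t else 0

lemma rayPt_zero (n : ℕ) : rayPt n 0 = 0 := by
  funext i; simp [rayPt]

lemma rayPt_add (n : ℕ) (s t : ℝ) : rayPt n s + rayPt n t = rayPt n (s + t) := by
  funext i; simp [rayPt]; split <;> simp

lemma nuv_last (n : ℕ) : nuv n (Fin.last n) = (n : ℝ) + 1 := by simp [nuv]

lemma linFun_nuv_vtx (n : ℕ) (i : Fin n) : linFun (nuv n) (vtx n i) = -1 := by
  simp [linFun_apply, Fin.sum_univ_castSucc, nuv, vtx, stdE, Fin.snoc_castSucc, Fin.snoc_last]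

lemma linFun_nuv_wpt (n : ℕ) : linFun (nuv n) (wpt n) = -1 := by
  simp [linFun_apply, Fin.sum_univ_castSucc, nuv, wpt, Fin.snoc_castSucc, Fin.snoc_last]

lemma linFun_rayPt {n : ℕ} (m : Fin (n+1) → ℝ) (t : ℝ) :
    linFun m (rayPt n t) = m (Fin.last n) * t := by
  simp [linFun_apply, rayPt, mul_ite, Finset.sum_ite_eq']

lemma lin_indep (n : ℕ) : LinearIndependent ℝ (fun i : Fin n => vtx n i - wpt n) := by
  rw [Fintype.linearIndependent_iff]
  intro g hg j
  have hl := congrFun hg (Fin.last n)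
  have hj := congrFun hg (Fin.castSucc j)
  simp [vtx, wpt, stdE, Fin.snoc_castSucc, Fin.snoc_last, sub_eq_add_neg, mul_add,
    Finset.sum_add_distrib, mul_ite, Finset.sum_ite_eq] at hl hj
  linarith

lemma nuv_ne_zero (n : ℕ) : nuv n ≠ 0 := by
  intro h
  have := congrFun h (Fin.last n)
  simp [nuv, Fin.snoc_last] at this
  have : (0:ℝ) < (n:ℝ) + 1 := by positivity
  linarith

lemma linFun_nuv_surj (n : ℕ) : Function.Surjective (linFun (nuv n)) := by
  intro r
  refine ⟨(r / ((n:ℝ)+1)) • (Pi.single (Fin.last n) 1 : Fin (n+1) → ℝ), ?_⟩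
  have hne : ((n:ℝ)+1) ≠ 0 := by positivity
  rw [_root_.map_smul]
  have : linFun (nuv n) (Pi.single (Fin.last n) 1 : Fin (n+1) → ℝ) = (n:ℝ) + 1 := by
    simp [linFun_apply, Pi.single_apply, mul_ite, Finset.sum_ite_eq', nuv, Fin.snoc_last]
  rw [this, smul_eq_mul]; field_simp

lemma finrank_ker_nuv (n : ℕ) :
    Module.finrank ℝ (LinearMap.ker (linFun (nuv n))) = n := by
  have h := LinearMap.finrank_range_add_finrank_ker (linFun (nuv n))
  rw [LinearMap.range_eq_top.2 (linFun_nuv_surj n)] at h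
  simp [Module.finrank_pi] at h
  omega

lemma verts_eq (n : ℕ) : simplexDualTopVerts n = Set.range (vtx n) ∪ {wpt n} := rfl

lemma linFun_nuv_verts (n : ℕ) : ∀ x ∈ simplexDualTopVerts n, linFun (nuv n) x = -1 := by
  rw [verts_eq]
  rintro x (⟨i, rfl⟩ | rfl)
  · exact linFun_nuv_vtx n i
  · exact linFun_nuv_wpt n

lemma finrank_vspan (n : ℕ) :
    Module.finrank ℝ (vectorSpan ℝ (simplexDualTopVerts n)) = n := by
  have hw : wpt n ∈ simplexDualTopVerts n := Or.inr rfl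
  have hv : ∀ i, vtx n i ∈ simplexDualTopVerts n := fun i => Or.inl ⟨i, rfl⟩
  have h1 : Submodule.span ℝ (Set.range fun i : Fin n => vtx n i - wpt n)
      ≤ vectorSpan ℝ (simplexDualTopVerts n) := by
    rw [Submodule.span_le]
    rintro _ ⟨i, rfl⟩
    exact vsub_mem_vectorSpan ℝ (hv i) hw
  have h2 : vectorSpan ℝ (simplexDualTopVerts n) ≤ LinearMap.ker (linFun (nuv n)) := by
    rw [vectorSpan_def, Submodule.span_le]
    rintro _ ⟨x, hx, y, hy, rfl⟩
    simp only [SetLike.mem_coe, LinearMap.mem_ker, vsub_eq_sub, map_sub]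
    rw [linFun_nuv_verts n x hx, linFun_nuv_verts n y hy]; ring
  have h3 := finrank_span_eq_card (lin_indep n)
  simp only [Fintype.card_fin] at h3
  have l1 := Submodule.finrank_mono h1
  have l2 := Submodule.finrank_mono h2
  rw [h3] at l1
  rw [finrank_ker_nuv] at l2
  omega

/-- The polyhedron with vertices `(e₁,0), …, (e_n,0), (-1,…,-1,-1)`
(extended infinitely in the `+y_{n+1}` direction) has exactly one bounded facet, and
that facet lies on the hyperplane dual to the lattice point `(-1, …, -1, n+1)`. -/
theorem stmt6 {n : ℕ} (hn : 1 ≤ n)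
    (P : Set (Fin (n+1) → ℝ))
    (hP : P = convexHull ℝ (simplexDualTopVerts n) + upRay n) :
    (∃! F : Set (Fin (n+1) → ℝ), IsFace P F n ∧ Bornology.IsBounded F) ∧
    (∀ F : Set (Fin (n+1) → ℝ), IsFace P F n → Bornology.IsBounded F →
      F ⊆ {x | ∑ i, (Fin.snoc (fun _ => (-1 : ℝ)) ((n : ℝ) + 1) : Fin (n+1) → ℝ) i * x i
            = -1}) ∧
    IsLatticePt (Fin.snoc (fun _ => (-1 : ℝ)) ((n : ℝ) + 1) : Fin (n+1) → ℝ) := by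
  have hCP : convexHull ℝ (simplexDualTopVerts n) ⊆ P := by
    intro x hx
    rw [hP, Set.mem_add]
    exact ⟨x, hx, rayPt n 0, ⟨0, le_refl 0, rfl⟩, by rw [rayPt_zero]; exact add_zero x⟩
  set C := convexHull ℝ (simplexDualTopVerts n) with hC
  have hPdec : ∀ x ∈ P, ∃ y ∈ C, ∃ t, 0 ≤ t ∧ x = y + rayPt n t := by
    intro x hx
    rw [hP, Set.mem_add] at hx
    obtain ⟨y, hy, r, ⟨t, ht, rfl⟩, rfl⟩ := hx
    exact ⟨y, hy, t, ht, rfl⟩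
  have hnuC : ∀ x ∈ C, linFun (nuv n) x = -1 := by
    intro x hx
    exact convexHull_min (linFun_nuv_verts n)
      (convex_hyperplane (linFun (nuv n)).isLinear (-1)) hx
  have hPray : ∀ x ∈ P, ∀ t, 0 ≤ t → x + rayPt n t ∈ P := by
    intro x hx t ht
    obtain ⟨y, hy, s, hs, rfl⟩ := hPdec x hx
    rw [add_assoc, rayPt_add, hP, Set.mem_add]
    exact ⟨y, hy, rayPt n (s + t), ⟨s + t, by linarith, rfl⟩, rfl⟩
  have hlbP : ∀ x ∈ P, -1 ≤ linFun (nuv n) x := by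
    intro x hx
    obtain ⟨y, hy, t, ht, rfl⟩ := hPdec x hx
    rw [map_add, linFun_rayPt, hnuC y hy, nuv_last]
    nlinarith [Nat.cast_nonneg (α := ℝ) n]
  have hFaceEq : {x | x ∈ P ∧ linFun (nuv n) x = -1} = C := by
    ext x
    constructor
    · rintro ⟨hxP, hx⟩
      obtain ⟨y, hy, t, ht, rfl⟩ := hPdec _ hxP
      rw [map_add, linFun_rayPt, hnuC y hy, nuv_last] at hx
      have ht0 : t = 0 := by
        have h1 : ((n:ℝ)+1) * t = 0 := by linarith
        rcases mul_eq_zero.1 h1 with h | h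
        · exfalso
          have : (0:ℝ) < (n:ℝ)+1 := by positivity
          linarith
        · exact h
      rw [ht0, rayPt_zero, add_zero]
      exact hy
    · intro hx
      exact ⟨hCP hx, hnuC x hx⟩
  have hdimC : Module.finrank ℝ (affineSpan ℝ C).direction = n := by
    rw [hC, affineSpan_convexHull, direction_affineSpan]
    exact finrank_vspan n
  have hCbdd : Bornology.IsBounded C := by
    rw [hC, isBounded_convexHull]
    exact ((Set.finite_range _).union (Set.finite_singleton _)).isBounded
  have faceC : IsFace P C n := ⟨nuv n, -1, nuv_ne_zero n, hlbP, hFaceEq.symm, hdimC⟩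
  have huniq : ∀ F, IsFace P F n → Bornology.IsBounded F → F = C := by
    intro F hF hFb
    obtain ⟨m, c, hm0, hlb, hFeq, hdim⟩ := hF
    have hlb' : ∀ x ∈ P, c ≤ linFun m x := hlb
    have hFeq' : F = {x | x ∈ P ∧ linFun m x = c} := hFeq
    have hFne : F.Nonempty := by
      by_contra h
      rw [Set.not_nonempty_iff_eq_empty] at h
      rw [h, AffineSubspace.span_empty, AffineSubspace.direction_bot, finrank_bot] at hdim
      omega
    have hwP : wpt n ∈ P := hCP (subset_convexHull ℝ _ (Or.inr rfl))
    obtain ⟨p, hp⟩ := hFne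
    have hp' := hFeq' ▸ hp
    have hpP : p ∈ P := hp'.1
    have hpc : linFun m p = c := hp'.2
    have htl : 0 < m (Fin.last n) := by
      rcases lt_trichotomy (m (Fin.last n)) 0 with h | h | h
      · exfalso
        set t := (linFun m (wpt n) + 1 - c) / (-(m (Fin.last n))) with htdef
        have hwc := hlb' _ hwP
        have ht0 : 0 ≤ t := div_nonneg (by linarith) (by linarith)
        have hm2 := hlb' _ (hPray _ hwP t ht0)
        rw [map_add, linFun_rayPt] at hm2
        have hne2 : -m (Fin.last n) ≠ 0 := by linarith
        have hml : m (Fin.last n) * t = -(linFun m (wpt n) + 1 - c) := by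
          rw [htdef, mul_div_assoc', div_neg, mul_div_cancel_left₀ _ (ne_of_lt h)]
        linarith
      · exfalso
        obtain ⟨B, hB⟩ := isBounded_iff_forall_norm_le.1 hFb
        set t := B + ‖p‖ + 1 with htdef
        have hBp : 0 ≤ B := le_trans (norm_nonneg p) (hB p hp)
        have ht0 : 0 ≤ t := by positivity
        have hmem : p + rayPt n t ∈ F := by
          rw [hFeq']
          refine ⟨hPray _ hpP t ht0, ?_⟩
          rw [map_add, linFun_rayPt, h, zero_mul, add_zero, hpc]
        have h1 := hB _ hmem
        have h2 : |t| ≤ ‖rayPt n t‖ := by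
          have := norm_le_pi_norm (rayPt n t) (Fin.last n)
          simpa [rayPt] using this
        have h3 : ‖rayPt n t‖ ≤ ‖p + rayPt n t‖ + ‖p‖ := by
          calc ‖rayPt n t‖ = ‖(p + rayPt n t) - p‖ := by rw [add_sub_cancel_left]
          _ ≤ ‖p + rayPt n t‖ + ‖p‖ := norm_sub_le _ _
        have habs : t ≤ |t| := le_abs_self t
        linarith
      · exact h
    have hFC : F ⊆ C := by
      intro x hx
      rw [hFeq'] at hx
      obtain ⟨hxP, hxc⟩ := hx
      obtain ⟨y, hy, t, ht, rfl⟩ := hPdec _ hxP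
      rw [map_add, linFun_rayPt] at hxc
      have hyc := hlb' y (hCP hy)
      have ht0 : t = 0 := by
        by_contra h'
        have hpos : 0 < t := lt_of_le_of_ne ht (Ne.symm h')
        nlinarith [mul_pos htl hpos]
      rw [ht0, rayPt_zero, add_zero]
      exact hy
    have hdir : (affineSpan ℝ F).direction = (affineSpan ℝ C).direction :=
      Submodule.eq_of_le_of_finrank_eq (AffineSubspace.direction_le (affineSpan_mono ℝ hFC))
        (by rw [hdim, hdimC])
    have hsp : affineSpan ℝ F = affineSpan ℝ C :=
      AffineSubspace.ext_of_direction_eq hdir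
        ⟨p, subset_affineSpan ℝ F hp, subset_affineSpan ℝ C (hFC hp)⟩
    have hCc : ∀ x ∈ C, linFun m x = c := by
      intro x hx
      have h1 : affineSpan ℝ F ≤
          AffineSubspace.comap (linFun m).toAffineMap (affineSpan ℝ ({c} : Set ℝ)) := by
        rw [affineSpan_le]
        intro z hz
        rw [hFeq'] at hz
        simp only [Set.mem_setOf_eq] at hz
        show (linFun m).toAffineMap z ∈ affineSpan ℝ ({c} : Set ℝ)
        rw [AffineSubspace.mem_affineSpan_singleton]
        exact hz.2
      have h2 : x ∈ affineSpan ℝ F := by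
        rw [hsp]
        exact subset_affineSpan ℝ C hx
      have h3 : (linFun m).toAffineMap x ∈ affineSpan ℝ ({c} : Set ℝ) := h1 h2
      rwa [AffineSubspace.mem_affineSpan_singleton] at h3
    refine Set.Subset.antisymm hFC ?_
    intro x hx
    rw [hFeq']
    exact ⟨hCP hx, hCc x hx⟩
  refine ⟨⟨C, ⟨faceC, hCbdd⟩, fun F hF => huniq F hF.1 hF.2⟩, ?_, ?_⟩
  · intro F hF hFb x hx
    rw [huniq F hF hFb] at hx
    exact hnuC x hx
  · intro i
    refine Fin.lastCases ?_ ?_ i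
    · refine ⟨(n:ℤ)+1, ?_⟩
      simp [Fin.snoc_last]
    · intro j
      refine ⟨-1, ?_⟩
      simp [Fin.snoc_castSucc]


end SemistableTops
end
end

section
/- Let Δ° be the (k-1)-dimensional standard reflexive simplex with vertices e_1, …, e_{k-1}, (-1,…,-1). For every integer a ≥ -1, the convex hull of the points (0,…,0,0), the vertices of the polar dual Δ of Δ° placed at height 0, together with the summit points (0,…,0,1), (a+1, 0, …, 0, 1), (0, a+1, 0, …, 0, 1), …, (0, …, 0, a+1, 1) is a short top whose reflexive boundary is Δ. -/
open Finset Matrix Pointwise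
open scoped Classical

noncomputable section

namespace SemistableTops

/-- Vertices of the standard reflexive simplex `Δ°` in `ℝ^n`: `e₁, …, e_n, (-1,…,-1)`. -/
def stdSimplexVerts (n : ℕ) : Set (Fin n → ℝ) :=
  (Set.range fun i : Fin n => fun j => if j = i then (1 : ℝ) else 0) ∪ {fun _ => -1}

/-- Vertices of the polar dual `Δ = (Δ°)°` of the standard simplex:
`(n+1)eᵢ - (1,…,1)` and `(-1,…,-1)`. -/
def dualSimplexVerts (n : ℕ) : Set (Fin n → ℝ) :=
  (Set.range fun i : Fin n => fun j => if j = i then (n : ℝ) else -1) ∪ {fun _ => -1}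


section Aux

/-! ### Auxiliary summation lemmas -/

lemma aux_sum_ite_left {n : ℕ} (i : Fin n) (b c : ℝ) :
    ∑ j, (if j = i then b else c) = b + ((n : ℝ) - 1) * c := by
  have h : ∀ j : Fin n, (if j = i then b else c) = (if j = i then b - c else 0) + c := by
    intro j; by_cases h : j = i <;> simp [h]
  simp only [h, Finset.sum_add_distrib, Finset.sum_ite_eq', Finset.mem_univ, if_true,
    Finset.sum_const, Finset.card_univ, Fintype.card_fin, nsmul_eq_mul]
  have h1 : 1 ≤ n := Nat.pos_of_ne_zero (by rintro rfl; exact i.elim0)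
  have : (1:ℝ) ≤ (n:ℝ) := by exact_mod_cast h1
  ring

lemma aux_sum_ite_mul_left {n : ℕ} (i : Fin n) (b c : ℝ) (f : Fin n → ℝ) :
    ∑ j, (if j = i then b else c) * f j = f i * (b - c) + (∑ j, f j) * c := by
  have h : ∀ j : Fin n, (if j = i then b else c) * f j
      = (if j = i then f j * (b - c) else 0) + f j * c := by
    intro j; by_cases h : j = i <;> simp [h] <;> ring
  simp only [h, Finset.sum_add_distrib, Finset.sum_ite_eq', Finset.mem_univ, if_true,
    ← Finset.sum_mul]

lemma aux_sum_mul_ite_right {n : ℕ} (j : Fin n) (b c : ℝ) (f : Fin n → ℝ) :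
    ∑ i, f i * (if j = i then b else c) = f j * (b - c) + (∑ i, f i) * c := by
  have h : ∀ i : Fin n, f i * (if j = i then b else c)
      = (if j = i then f i * (b - c) else 0) + f i * c := by
    intro i; by_cases h : j = i <;> simp [h] <;> ring
  simp only [h, Finset.sum_add_distrib, Finset.sum_ite_eq, Finset.mem_univ, if_true,
    ← Finset.sum_mul]

/-! ### Hull descriptions of the two simplices -/

lemma aux_hull_dual (n : ℕ) :
    convexHull ℝ (dualSimplexVerts n)
      = {y : Fin n → ℝ | (∀ i, -1 ≤ y i) ∧ ∑ i, y i ≤ 1} := by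
  apply Set.Subset.antisymm
  · apply convexHull_min
    · rintro v (⟨i, rfl⟩ | rfl)
      · refine ⟨fun j => ?_, ?_⟩
        · by_cases h : j = i <;> simp [h]
          linarith [Nat.cast_nonneg (α := ℝ) n]
        · rw [aux_sum_ite_left]; ring_nf; rfl
      · refine ⟨fun j => le_refl _, ?_⟩
        simp only [Finset.sum_const, Finset.card_univ, Fintype.card_fin, nsmul_eq_mul]
        nlinarith [Nat.cast_nonneg (α := ℝ) n]
    · intro u hu v hv s t hs ht hst
      refine ⟨fun i => ?_, ?_⟩
      · have h1 := hu.1 i; have h2 := hv.1 i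
        simp only [Pi.add_apply, Pi.smul_apply, smul_eq_mul]
        nlinarith
      · have h1 := hu.2; have h2 := hv.2
        simp only [Pi.add_apply, Pi.smul_apply, smul_eq_mul, Finset.sum_add_distrib,
          ← Finset.mul_sum]
        nlinarith
  · rintro y ⟨hy1, hy2⟩
    set S := ∑ i, y i with hS
    have hpos : (0:ℝ) < (n:ℝ) + 1 := by positivity
    refine mem_convexHull_of_exists_fintype (ι := Option (Fin n))
      (fun o => Option.elim o ((1 - S) / ((n:ℝ)+1)) (fun i => (y i + 1) / ((n:ℝ)+1)))
      (fun o => Option.elim o (fun _ => -1) (fun i j => if j = i then (n:ℝ) else -1))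
      ?_ ?_ ?_ ?_
    · rintro (_ | i)
      · simp only [Option.elim]
        exact div_nonneg (by linarith) hpos.le
      · simp only [Option.elim]
        exact div_nonneg (by linarith [hy1 i]) hpos.le
    · rw [Fintype.sum_option]
      simp only [Option.elim]
      rw [← Finset.sum_div, Finset.sum_add_distrib, Finset.sum_const, Finset.card_univ,
        Fintype.card_fin, nsmul_eq_mul, mul_one]
      field_simp
      rw [← hS]; ring
    · rintro (_ | i)
      · exact Or.inr rfl
      · exact Or.inl ⟨i, rfl⟩
    · funext j
      rw [Finset.sum_apply, Fintype.sum_option]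
      simp only [Option.elim, Pi.smul_apply, smul_eq_mul]
      rw [aux_sum_mul_ite_right]
      rw [← Finset.sum_div, Finset.sum_add_distrib, Finset.sum_const, Finset.card_univ,
        Fintype.card_fin, nsmul_eq_mul, mul_one]
      field_simp
      ring

lemma aux_hull_std (n : ℕ) :
    convexHull ℝ (stdSimplexVerts n)
      = {y : Fin n → ℝ | (∀ i, -1 ≤ ((n:ℝ)+1) * y i - ∑ j, y j) ∧ ∑ j, y j ≤ 1} := by
  apply Set.Subset.antisymm
  · apply convexHull_min
    · rintro v (⟨i, rfl⟩ | rfl)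
      · refine ⟨fun j => ?_, ?_⟩
        · rw [aux_sum_ite_left]
          by_cases h : j = i <;> simp [h] <;> nlinarith [Nat.cast_nonneg (α := ℝ) n]
        · rw [aux_sum_ite_left]; ring_nf
          nlinarith [Nat.cast_nonneg (α := ℝ) n]
      · refine ⟨fun j => ?_, ?_⟩ <;>
          simp only [Finset.sum_const, Finset.card_univ, Fintype.card_fin, nsmul_eq_mul] <;>
          nlinarith [Nat.cast_nonneg (α := ℝ) n]
    · intro u hu v hv s t hs ht hst
      have e : ∑ j, (s • u + t • v) j = s * ∑ j, u j + t * ∑ j, v j := by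
        simp only [Pi.add_apply, Pi.smul_apply, smul_eq_mul, Finset.sum_add_distrib,
          ← Finset.mul_sum]
      refine ⟨fun i => ?_, ?_⟩
      · have h1 := hu.1 i; have h2 := hv.1 i
        rw [e]
        simp only [Pi.add_apply, Pi.smul_apply, smul_eq_mul]
        nlinarith
      · rw [e]; nlinarith [hu.2, hv.2]
  · rintro y ⟨hy1, hy2⟩
    set S := ∑ i, y i with hS
    have hpos : (0:ℝ) < (n:ℝ) + 1 := by positivity
    refine mem_convexHull_of_exists_fintype (ι := Option (Fin n))
      (fun o => Option.elim o ((1 - S) / ((n:ℝ)+1))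
        (fun i => (((n:ℝ)+1) * y i + 1 - S) / ((n:ℝ)+1)))
      (fun o => Option.elim o (fun _ => -1) (fun i j => if j = i then (1:ℝ) else 0))
      ?_ ?_ ?_ ?_
    · rintro (_ | i)
      · simp only [Option.elim]
        exact div_nonneg (by linarith) hpos.le
      · simp only [Option.elim]
        exact div_nonneg (by linarith [hy1 i]) hpos.le
    · have hsum : ∑ i, (((n:ℝ)+1) * y i + 1 - S) = ((n:ℝ)+1)*S + (n:ℝ)*(1 - S) := by
        rw [Finset.sum_sub_distrib, Finset.sum_add_distrib, ← Finset.mul_sum, Finset.sum_const,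
          Finset.sum_const, Finset.card_univ, Fintype.card_fin, nsmul_eq_mul, nsmul_eq_mul,
          ← hS]
        ring
      rw [Fintype.sum_option]
      simp only [Option.elim]
      rw [← Finset.sum_div, hsum]
      field_simp
      ring
    · rintro (_ | i)
      · exact Or.inr rfl
      · exact Or.inl ⟨i, rfl⟩
    · funext j
      rw [Finset.sum_apply, Fintype.sum_option]
      simp only [Option.elim, Pi.smul_apply, smul_eq_mul]
      have hsum : ∑ i, (((n:ℝ)+1) * y i + 1 - S) = ((n:ℝ)+1)*S + (n:ℝ)*(1 - S) := by
        rw [Finset.sum_sub_distrib, Finset.sum_add_distrib, ← Finset.mul_sum, Finset.sum_const,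
          Finset.sum_const, Finset.card_univ, Fintype.card_fin, nsmul_eq_mul, nsmul_eq_mul,
          ← hS]
        ring
      rw [aux_sum_mul_ite_right, ← Finset.sum_div, hsum]
      field_simp
      ring

/-! ### Polar duals -/

lemma aux_polarDual_convexHull {k : ℕ} (S : Set (Fin k → ℝ)) :
    polarDual (convexHull ℝ S) = polarDual S := by
  apply Set.Subset.antisymm
  · intro y hy x hx
    exact hy x (subset_convexHull ℝ S hx)
  · intro y hy x hx
    have hC : Convex ℝ {x : Fin k → ℝ | -1 ≤ ∑ i, x i * y i} := by
      intro u hu v hv s t hs ht hst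
      simp only [Set.mem_setOf_eq, Pi.add_apply, Pi.smul_apply, smul_eq_mul, add_mul, mul_assoc,
        Finset.sum_add_distrib, ← Finset.mul_sum] at *
      nlinarith
    exact convexHull_min hy hC hx

lemma aux_polarDual_stdVerts (n : ℕ) :
    polarDual (stdSimplexVerts n)
      = {y : Fin n → ℝ | (∀ i, -1 ≤ y i) ∧ ∑ i, y i ≤ 1} := by
  ext y
  constructor
  · intro hy
    refine ⟨fun i => ?_, ?_⟩
    · have h := hy (fun j => if j = i then (1:ℝ) else 0) (Or.inl ⟨i, rfl⟩)
      rw [aux_sum_ite_mul_left] at h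
      simpa using h
    · have := hy _ (Or.inr rfl)
      simp only [neg_one_mul, Finset.sum_neg_distrib] at this
      linarith
  · rintro ⟨h1, h2⟩ x (⟨i, rfl⟩ | rfl)
    · show -1 ≤ ∑ j, (if j = i then (1:ℝ) else 0) * y j
      rw [aux_sum_ite_mul_left]
      have := h1 i
      nlinarith
    · simp only [neg_one_mul, Finset.sum_neg_distrib]
      linarith

lemma aux_polarDual_dualVerts (n : ℕ) :
    polarDual (dualSimplexVerts n)
      = {y : Fin n → ℝ | (∀ i, -1 ≤ ((n:ℝ)+1) * y i - ∑ j, y j) ∧ ∑ j, y j ≤ 1} := by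
  ext y
  have key : ∀ i : Fin n, ∑ j, (if j = i then (n:ℝ) else -1) * y j
      = ((n:ℝ)+1) * y i - ∑ j, y j := by
    intro i; rw [aux_sum_ite_mul_left]; ring
  constructor
  · intro hy
    refine ⟨fun i => ?_, ?_⟩
    · have h := hy (fun j => if j = i then (n:ℝ) else -1) (Or.inl ⟨i, rfl⟩)
      rwa [key i] at h
    · have := hy _ (Or.inr rfl)
      simp only [neg_one_mul, Finset.sum_neg_distrib] at this
      linarith
  · rintro ⟨h1, h2⟩ x (⟨i, rfl⟩ | rfl)
    · show -1 ≤ ∑ j, (if j = i then (n:ℝ) else -1) * y j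
      rw [key i]; exact h1 i
    · simp only [neg_one_mul, Finset.sum_neg_distrib]
      linarith

/-! ### The H-representation of the top -/

def auxGens (n : ℕ) (a : ℤ) : Set (Fin (n+1) → ℝ) :=
  ((fun v => (Fin.snoc v 0 : Fin (n+1) → ℝ)) '' (dualSimplexVerts n ∪ {0})) ∪
  ((fun v => (Fin.snoc v 1 : Fin (n+1) → ℝ)) ''
    ((Set.range fun i : Fin n => fun j => if j = i then (a : ℝ) + 1 else 0) ∪ {0}))

def auxPset (n : ℕ) (a : ℤ) : Set (Fin (n+1) → ℝ) :=
  {x | 0 ≤ x (Fin.last n) ∧ x (Fin.last n) ≤ 1 ∧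
    (∀ i : Fin n, x (Fin.last n) - 1 ≤ x i.castSucc) ∧
    ∑ i : Fin n, x i.castSucc ≤ 1 + (a:ℝ) * x (Fin.last n)}

lemma aux_hullT (n : ℕ) (a : ℤ) (ha : -1 ≤ a) :
    convexHull ℝ (auxGens n a) = auxPset n a := by
  have ha' : (-1:ℝ) ≤ (a:ℝ) := by exact_mod_cast ha
  apply Set.Subset.antisymm
  · apply convexHull_min
    · rintro x (⟨v, ((⟨i, rfl⟩ | rfl) | rfl), rfl⟩ | ⟨v, (⟨i, rfl⟩ | rfl), rfl⟩)
      · refine ⟨?_, ?_, fun j => ?_, ?_⟩ <;>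
          simp only [Fin.snoc_last, Fin.snoc_castSucc]
        · norm_num
        · norm_num
        · by_cases hj : j = i <;>
            first
              | (simp [hj]; linarith [Nat.cast_nonneg (α := ℝ) n])
              | (simp [hj])
        · rw [aux_sum_ite_left]; ring_nf; norm_num
      · refine ⟨?_, ?_, fun j => ?_, ?_⟩ <;>
          simp only [Fin.snoc_last, Fin.snoc_castSucc]
        · norm_num
        · norm_num
        · norm_num
        · simp only [Finset.sum_const, Finset.card_univ, Fintype.card_fin, nsmul_eq_mul]
          nlinarith [Nat.cast_nonneg (α := ℝ) n]
      · refine ⟨?_, ?_, fun j => ?_, ?_⟩ <;>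
          simp only [Fin.snoc_last, Fin.snoc_castSucc, Pi.zero_apply]
        · norm_num
        · norm_num
        · norm_num
        · simp
      · refine ⟨?_, ?_, fun j => ?_, ?_⟩ <;>
          simp only [Fin.snoc_last, Fin.snoc_castSucc]
        · norm_num
        · norm_num
        · by_cases hj : j = i <;> simp [hj] <;> linarith
        · rw [aux_sum_ite_left]; ring_nf; linarith
      · refine ⟨?_, ?_, fun j => ?_, ?_⟩ <;>
          simp only [Fin.snoc_last, Fin.snoc_castSucc, Pi.zero_apply]
        · norm_num
        · norm_num
        · norm_num
        · simp only [Finset.sum_const, Finset.card_univ, Fintype.card_fin, nsmul_eq_mul,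
            mul_zero, smul_zero]
          linarith
    · intro u hu v hv s t hs ht hst
      obtain ⟨hu0, hu1, huc, hus⟩ := hu
      obtain ⟨hv0, hv1, hvc, hvs⟩ := hv
      have e : ∑ j : Fin n, (s • u + t • v) j.castSucc
          = s * ∑ j : Fin n, u j.castSucc + t * ∑ j : Fin n, v j.castSucc := by
        simp only [Pi.add_apply, Pi.smul_apply, smul_eq_mul, Finset.sum_add_distrib,
          ← Finset.mul_sum]
      refine ⟨?_, ?_, fun j => ?_, ?_⟩
      · simp only [Pi.add_apply, Pi.smul_apply, smul_eq_mul]; nlinarith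
      · simp only [Pi.add_apply, Pi.smul_apply, smul_eq_mul]; nlinarith
      · have h1 := huc j; have h2 := hvc j
        simp only [Pi.add_apply, Pi.smul_apply, smul_eq_mul]; nlinarith
      · rw [e]
        simp only [Pi.add_apply, Pi.smul_apply, smul_eq_mul]; nlinarith
  · rintro x ⟨h0, h1, hcoord, hsum⟩
    set h := x (Fin.last n) with hh
    set t : Fin n → ℝ := fun j => x j.castSucc + 1 - h with htdef
    have ht0 : ∀ j, 0 ≤ t j := fun j => by have := hcoord j; simp only [htdef]; linarith
    set cap : ℝ := ((n:ℝ)+1)*(1-h) + ((a:ℝ)+1)*h with hcap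
    have hTsum : ∑ j, t j = (∑ j : Fin n, x j.castSucc) + (n:ℝ)*(1-h) := by
      simp only [htdef]
      rw [Finset.sum_sub_distrib, Finset.sum_add_distrib, Finset.sum_const, Finset.sum_const,
        Finset.card_univ, Fintype.card_fin, nsmul_eq_mul, nsmul_eq_mul]
      ring
    have hTle : ∑ j, t j ≤ cap := by rw [hTsum, hcap]; nlinarith
    have hcap0 : 0 ≤ cap := by rw [hcap]; nlinarith
    by_cases hc : cap = 0
    · have he1 : h = 1 := by
        by_contra hne
        have hlt : h < 1 := lt_of_le_of_ne h1 hne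
        have : ((n:ℝ)+1)*(1-h) > 0 :=
          mul_pos (by positivity) (by linarith)
        rw [hcap] at hc
        nlinarith
      have hx0 : ∀ j : Fin n, x j.castSucc = 0 := by
        have hnn : ∀ j ∈ Finset.univ, (0:ℝ) ≤ x (Fin.castSucc j) := by
          intro j _; have := hcoord j; rw [he1] at this; linarith
        have ha1 : (a:ℝ) + 1 = 0 := by
          rw [hcap, he1] at hc
          simpa using hc
        have hle : ∑ j : Fin n, x j.castSucc ≤ 0 := by
          rw [he1] at hsum; nlinarith
        have hz : ∑ j : Fin n, x j.castSucc = 0 :=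
          le_antisymm hle (Finset.sum_nonneg hnn)
        intro j
        exact (Finset.sum_eq_zero_iff_of_nonneg hnn).1 hz j (Finset.mem_univ j)
      have hxe : x = Fin.snoc (0 : Fin n → ℝ) 1 := by
        funext i
        refine Fin.lastCases ?_ (fun j => ?_) i
        · rw [Fin.snoc_last, ← hh, he1]
        · rw [Fin.snoc_castSucc, hx0 j, Pi.zero_apply]
      rw [hxe]
      exact subset_convexHull ℝ _ (Or.inr ⟨0, Or.inr rfl, rfl⟩)
    · have hcpos : 0 < cap := lt_of_le_of_ne hcap0 (Ne.symm hc)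
      refine mem_convexHull_of_exists_fintype (ι := Option (Fin n) ⊕ Option (Fin n))
        (Sum.elim
          (fun o => Option.elim o ((1-h) - ∑ j, (1-h) * t j / cap)
            (fun j => (1-h) * t j / cap))
          (fun o => Option.elim o (h - ∑ j, h * t j / cap)
            (fun j => h * t j / cap)))
        (Sum.elim
          (fun o => Option.elim o (Fin.snoc (fun _ => -1) 0)
            (fun i => Fin.snoc (fun j => if j = i then (n:ℝ) else -1) 0))
          (fun o => Option.elim o (Fin.snoc (0 : Fin n → ℝ) 1)
            (fun i => Fin.snoc (fun j => if j = i then (a:ℝ)+1 else 0) 1)))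
        ?_ ?_ ?_ ?_
      · rintro ((_ | i) | (_ | i)) <;> simp only [Sum.elim_inl, Sum.elim_inr, Option.elim]
        · rw [sub_nonneg, ← Finset.sum_div, ← Finset.mul_sum, div_le_iff₀ hcpos]
          nlinarith [Finset.sum_nonneg (fun j (_ : j ∈ Finset.univ) => ht0 j)]
        · exact div_nonneg (mul_nonneg (by linarith) (ht0 i)) hcap0
        · rw [sub_nonneg, ← Finset.sum_div, ← Finset.mul_sum, div_le_iff₀ hcpos]
          nlinarith [Finset.sum_nonneg (fun j (_ : j ∈ Finset.univ) => ht0 j)]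
        · exact div_nonneg (mul_nonneg (by linarith) (ht0 i)) hcap0
      · rw [Fintype.sum_sum_type, Fintype.sum_option, Fintype.sum_option]
        simp only [Sum.elim_inl, Sum.elim_inr, Option.elim]
        ring
      · rintro ((_ | i) | (_ | i)) <;> simp only [Sum.elim_inl, Sum.elim_inr, Option.elim]
        · exact Or.inl ⟨_, Or.inl (Or.inr rfl), rfl⟩
        · exact Or.inl ⟨_, Or.inl (Or.inl ⟨i, rfl⟩), rfl⟩
        · exact Or.inr ⟨0, Or.inr rfl, rfl⟩
        · exact Or.inr ⟨_, Or.inl ⟨i, rfl⟩, rfl⟩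
      · funext i
        rw [Finset.sum_apply, Fintype.sum_sum_type, Fintype.sum_option, Fintype.sum_option]
        simp only [Sum.elim_inl, Sum.elim_inr, Option.elim, Pi.smul_apply, smul_eq_mul]
        refine Fin.lastCases ?_ (fun j => ?_) i
        · simp only [Fin.snoc_last, mul_zero, mul_one, Finset.sum_const_zero, add_zero,
            zero_add, ← hh]
          ring
        · simp only [Fin.snoc_castSucc, Pi.zero_apply]
          rw [aux_sum_mul_ite_right, aux_sum_mul_ite_right]
          have key : (1-h) * t j / cap * ((n:ℝ) - -1) + h * t j / cap * (((a:ℝ)+1) - 0)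
              = x j.castSucc + 1 - h := by
            have e1 : (1-h) * t j * ((n:ℝ) - -1) + h * t j * (((a:ℝ)+1) - 0)
                = t j * cap := by rw [hcap]; ring
            rw [div_mul_eq_mul_div, div_mul_eq_mul_div, ← add_div, e1,
              mul_div_assoc, div_self hc, mul_one, htdef]
          linear_combination key

def auxNset (n : ℕ) (a : ℤ) : Set (Fin (n+1) → ℝ) :=
  (Set.range fun i : Fin n =>
      fun j : Fin (n+1) => if j = i.castSucc then (1:ℝ) else if j = Fin.last n then -1 else 0) ∪
  {fun j => if j = Fin.last n then (a:ℝ) else -1} ∪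
  {fun j => if j = Fin.last n then (-1:ℝ) else 0}

lemma aux_s1 {n : ℕ} (i : Fin n) (x : Fin (n+1) → ℝ) :
    ∑ j : Fin (n+1), (if j = i.castSucc then (1:ℝ) else if j = Fin.last n then -1 else 0) * x j
      = x i.castSucc - x (Fin.last n) := by
  rw [Fin.sum_univ_castSucc]
  have hb : ∀ j : Fin n,
      (if (j.castSucc : Fin (n+1)) = i.castSucc then (1:ℝ)
        else if (j.castSucc : Fin (n+1)) = Fin.last n then -1 else 0) * x j.castSucc
      = (if j = i then (1:ℝ) else 0) * x j.castSucc := by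
    intro j
    simp [Fin.castSucc_inj, (Fin.castSucc_lt_last j).ne]
  rw [Finset.sum_congr rfl (fun j _ => hb j), aux_sum_ite_mul_left]
  have : (Fin.last n : Fin (n+1)) ≠ i.castSucc := (Fin.castSucc_lt_last i).ne'
  simp [this]
  ring

lemma aux_s2 {n : ℕ} (a : ℤ) (x : Fin (n+1) → ℝ) :
    ∑ j : Fin (n+1), (if j = Fin.last n then (a:ℝ) else -1) * x j
      = (a:ℝ) * x (Fin.last n) - ∑ i : Fin n, x i.castSucc := by
  rw [Fin.sum_univ_castSucc]
  have hb : ∀ j : Fin n,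
      (if (j.castSucc : Fin (n+1)) = Fin.last n then (a:ℝ) else -1) * x j.castSucc
      = -(x j.castSucc) := by
    intro j; simp [(Fin.castSucc_lt_last j).ne]
  rw [Finset.sum_congr rfl (fun j _ => hb j)]
  simp [Finset.sum_neg_distrib]
  ring

lemma aux_s3 {n : ℕ} (x : Fin (n+1) → ℝ) :
    ∑ j : Fin (n+1), (if j = Fin.last n then (-1:ℝ) else 0) * x j = -x (Fin.last n) := by
  rw [Fin.sum_univ_castSucc]
  have hb : ∀ j : Fin n,
      (if (j.castSucc : Fin (n+1)) = Fin.last n then (-1:ℝ) else 0) * x j.castSucc = 0 := by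
    intro j; simp [(Fin.castSucc_lt_last j).ne]
  rw [Finset.sum_congr rfl (fun j _ => hb j)]
  simp

lemma aux_Pset_eq_inter (n : ℕ) (a : ℤ) :
    auxPset n a = {x : Fin (n+1) → ℝ | 0 ≤ x (Fin.last n)} ∩
      ⋂ m ∈ auxNset n a, {x | -1 ≤ ∑ i, m i * x i} := by
  ext x
  simp only [auxPset, auxNset, Set.mem_inter_iff, Set.mem_iInter, Set.mem_setOf_eq]
  constructor
  · rintro ⟨h0, h1, hc, hs⟩
    refine ⟨h0, ?_⟩
    rintro m ((⟨i, rfl⟩ | rfl) | rfl)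
    · rw [aux_s1]; linarith [hc i]
    · rw [aux_s2]; linarith
    · rw [aux_s3]; linarith
  · rintro ⟨h0, hm⟩
    have k1 : ∀ i : Fin n, x (Fin.last n) - 1 ≤ x i.castSucc := by
      intro i
      have := hm _ (Or.inl (Or.inl ⟨i, rfl⟩))
      rw [aux_s1] at this; linarith
    have k2 := hm _ (Or.inl (Or.inr rfl))
    rw [aux_s2] at k2
    have k3 := hm _ (Or.inr rfl)
    rw [aux_s3] at k3
    exact ⟨h0, by linarith, k1, by linarith⟩

/-! ### Lattice point helpers -/

lemma aux_latticePt_snoc {n : ℕ} {v : Fin n → ℝ} (hv : IsLatticePt v) {c : ℝ}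
    (hc : ∃ m : ℤ, c = (m:ℝ)) : IsLatticePt (Fin.snoc v c : Fin (n+1) → ℝ) := by
  intro i
  refine Fin.lastCases ?_ (fun j => ?_) i
  · obtain ⟨m, hm⟩ := hc
    exact ⟨m, by simpa using hm⟩
  · obtain ⟨m, hm⟩ := hv j
    exact ⟨m, by simpa using hm⟩

lemma aux_latticePt_ite {n : ℕ} (i : Fin n) (b c : ℤ) :
    IsLatticePt (fun j : Fin n => if j = i then (b:ℝ) else (c:ℝ)) := by
  intro j
  refine ⟨if j = i then b else c, ?_⟩
  by_cases h : j = i <;> simp [h]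

end Aux

/-- For every integer `a ≥ -1`, the convex hull of the origin, the vertices
of `Δ` at height `0`, and the summit points `(0,…,0,1)` and `((a+1)eᵢ, 1)` is a short top
whose reflexive boundary is `Δ`, the polar dual of the standard simplex. -/
theorem stmt7 {n : ℕ} (hn : 1 ≤ n) (a : ℤ) (ha : -1 ≤ a)
    (Δ : Set (Fin n → ℝ)) (hΔ : Δ = convexHull ℝ (dualSimplexVerts n))
    (T : Set (Fin (n+1) → ℝ))
    (hT : T = convexHull ℝ
      (((fun v => (Fin.snoc v 0 : Fin (n+1) → ℝ)) '' (dualSimplexVerts n ∪ {0})) ∪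
       ((fun v => (Fin.snoc v 1 : Fin (n+1) → ℝ)) ''
         ((Set.range fun i : Fin n => fun j => if j = i then (a : ℝ) + 1 else 0) ∪ {0})))) :
    Δ = polarDual (convexHull ℝ (stdSimplexVerts n)) ∧
    IsShortTop T ∧
    projInit '' (T ∩ {x | lastCoord x = 0}) = Δ := by
  subst hΔ
  have hT' : T = convexHull ℝ (auxGens n a) := hT
  have hP : T = auxPset n a := by rw [hT', aux_hullT n a ha]
  have hH1 : convexHull ℝ (dualSimplexVerts n)
      = {y : Fin n → ℝ | (∀ i, -1 ≤ y i) ∧ ∑ i, y i ≤ 1} := aux_hull_dual n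
  have himg : projInit '' (T ∩ {x | lastCoord x = 0})
      = {y : Fin n → ℝ | (∀ i, -1 ≤ y i) ∧ ∑ i, y i ≤ 1} := by
    rw [hP]
    ext y
    constructor
    · rintro ⟨x, ⟨⟨h0, h1, hc, hs⟩, hlast⟩, rfl⟩
      have hl : x (Fin.last n) = 0 := hlast
      refine ⟨fun i => ?_, ?_⟩
      · have := hc i
        show -1 ≤ x i.castSucc
        rw [hl] at this; linarith
      · show ∑ i : Fin n, x i.castSucc ≤ 1
        rw [hl, mul_zero, add_zero] at hs
        exact hs
    · rintro ⟨hy1, hy2⟩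
      refine ⟨Fin.snoc y 0, ⟨⟨?_, ?_, fun i => ?_, ?_⟩, ?_⟩, ?_⟩
      · simp
      · simp
      · simp only [Fin.snoc_last, Fin.snoc_castSucc]
        linarith [hy1 i]
      · simp only [Fin.snoc_last, Fin.snoc_castSucc, mul_zero, add_zero]
        exact hy2
      · show (Fin.snoc y 0 : Fin (n+1) → ℝ) (Fin.last n) = 0
        simp
      · funext i; simp [projInit]
  refine ⟨?_, ⟨⟨?_, ?_, ?_, ?_⟩, ?_⟩, ?_⟩
  · rw [aux_polarDual_convexHull, aux_polarDual_stdVerts]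
    exact hH1
  · -- IsLatticePolytope T
    have hfin : (auxGens n a).Finite := by
      apply Set.Finite.union <;> apply Set.Finite.image
      · exact ((Set.finite_range _).union (Set.finite_singleton _)).union (Set.finite_singleton _)
      · exact (Set.finite_range _).union (Set.finite_singleton _)
    refine ⟨hfin.toFinset, ?_, ?_⟩
    · intro v hv
      rw [Set.Finite.mem_toFinset] at hv
      rcases hv with ⟨u, ((⟨i, rfl⟩ | rfl) | rfl), rfl⟩ | ⟨u, (⟨i, rfl⟩ | rfl), rfl⟩
      · exact aux_latticePt_snoc
          (fun j => ⟨if j = i then (n:ℤ) else -1, by by_cases h : j = i <;> simp [h]⟩)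
          ⟨0, by norm_num⟩
      · exact aux_latticePt_snoc (fun j => ⟨-1, by norm_num⟩) ⟨0, by norm_num⟩
      · exact aux_latticePt_snoc (fun j => ⟨0, by norm_num⟩) ⟨0, by norm_num⟩
      · exact aux_latticePt_snoc
          (fun j => ⟨if j = i then a+1 else 0, by by_cases h : j = i <;> simp [h]⟩)
          ⟨1, by norm_num⟩
      · exact aux_latticePt_snoc (fun j => ⟨0, by norm_num⟩) ⟨1, by norm_num⟩
    · rw [Set.Finite.coe_toFinset]; exact hT'
  · -- halfspace
    intro x hx
    rw [hP] at hx
    exact hx.1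
  · -- facets
    have hfin : (auxNset n a).Finite :=
      ((Set.finite_range _).union (Set.finite_singleton _)).union (Set.finite_singleton _)
    refine ⟨hfin.toFinset, ?_, ?_⟩
    · intro m hm
      rw [Set.Finite.mem_toFinset] at hm
      rcases hm with (⟨i, rfl⟩ | rfl) | rfl
      · intro j
        refine ⟨if j = i.castSucc then 1 else if j = Fin.last n then -1 else 0, ?_⟩
        by_cases h1 : j = i.castSucc <;> by_cases h2 : j = Fin.last n <;> simp [h1, h2]
      · intro j
        refine ⟨if j = Fin.last n then a else -1, ?_⟩
        by_cases h2 : j = Fin.last n <;> simp [h2]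
      · intro j
        refine ⟨if j = Fin.last n then -1 else 0, ?_⟩
        by_cases h2 : j = Fin.last n <;> simp [h2]
    · rw [hP, aux_Pset_eq_inter n a]
      congr 1
      ext x
      simp only [Set.mem_iInter, Set.Finite.mem_toFinset]
  · -- reflexive boundary
    rw [himg]
    refine ⟨?_, ⟨fun i => by norm_num, by simp⟩, ?_⟩
    · have hfin : (dualSimplexVerts n).Finite :=
        (Set.finite_range _).union (Set.finite_singleton _)
      refine ⟨hfin.toFinset, ?_, ?_⟩
      · intro v hv
        rw [Set.Finite.mem_toFinset] at hv
        rcases hv with ⟨i, rfl⟩ | rfl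
        · exact fun j => ⟨if j = i then (n:ℤ) else -1, by by_cases h : j = i <;> simp [h]⟩
        · exact fun j => ⟨-1, by norm_num⟩
      · rw [Set.Finite.coe_toFinset]
        exact hH1.symm
    · have hdual : polarDual {y : Fin n → ℝ | (∀ i, -1 ≤ y i) ∧ ∑ i, y i ≤ 1}
          = convexHull ℝ (stdSimplexVerts n) := by
        rw [← hH1, aux_polarDual_convexHull, aux_polarDual_dualVerts, aux_hull_std]
      rw [hdual]
      have hfin : (stdSimplexVerts n).Finite :=
        (Set.finite_range _).union (Set.finite_singleton _)
      refine ⟨hfin.toFinset, ?_, by rw [Set.Finite.coe_toFinset]⟩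
      intro v hv
      rw [Set.Finite.mem_toFinset] at hv
      rcases hv with ⟨i, rfl⟩ | rfl
      · exact fun j => ⟨if j = i then 1 else 0, by by_cases h : j = i <;> simp [h]⟩
      · exact fun j => ⟨-1, by norm_num⟩
  · -- shortness
    intro x hx
    obtain ⟨⟨hxT, hx1⟩, -⟩ := hx
    rw [hP] at hxT
    exact le_antisymm hxT.2.1 hx1
  · -- part 3
    rw [himg]
    exact hH1.symm


end SemistableTops
end
end

section
/- If a three-dimensional reflexive polytope Δ can be the boundary of a four-dimensional short top whose polar dual has (0,0,0,-1) in the interior of an edge, then the origin lies in the interior of a line segment joining two lattice points of Δ°. -/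
open Finset Matrix Pointwise
open scoped Classical

noncomputable section

namespace SemistableTops

section Aux


/-- the vertical unit vector in `ℝ⁴`. -/
private def vertE : Fin 4 → ℝ := fun i => if i = Fin.last 3 then 1 else 0

private lemma sum_last_split (x y : Fin 4 → ℝ) :
    ∑ i, x i * y i
      = (∑ i : Fin 3, x i.castSucc * y i.castSucc) + x (Fin.last 3) * y (Fin.last 3) :=
  Fin.sum_univ_castSucc _

private lemma sum_mul_smul_vertE (x : Fin 4 → ℝ) (t : ℝ) :
    ∑ i, x i * (t • vertE) i = x (Fin.last 3) * t := by
  have : ∀ i, x i * (t • vertE) i = if i = Fin.last 3 then x (Fin.last 3) * t else 0 := by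
    intro i
    by_cases h : i = Fin.last 3 <;> simp [vertE, h, mul_comm, -Fin.reduceLast]
  rw [Finset.sum_congr rfl fun i _ => this i]
  simp

private lemma polarDual_convex {k : ℕ} (S : Set (Fin k → ℝ)) : Convex ℝ (polarDual S) := by
  intro y₁ h₁ y₂ h₂ a b ha hb hab x hx
  have h1 := h₁ x hx
  have h2 := h₂ x hx
  have hs : ∑ i, x i * (a • y₁ + b • y₂) i
      = a * ∑ i, x i * y₁ i + b * ∑ i, x i * y₂ i := by
    rw [Finset.mul_sum, Finset.mul_sum, ← Finset.sum_add_distrib]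
    refine Finset.sum_congr rfl fun i _ => ?_
    simp [smul_eq_mul]
    ring
  rw [hs]
  nlinarith

private lemma polarDual_vadd_vert {T : Set (Fin 4 → ℝ)} (hhalf : ∀ x ∈ T, 0 ≤ lastCoord x)
    {y : Fin 4 → ℝ} (hy : y ∈ polarDual T) {t : ℝ} (ht : 0 ≤ t) :
    y + t • vertE ∈ polarDual T := by
  intro x hx
  have h1 := hy x hx
  have hs : ∑ i, x i * (y + t • vertE) i
      = (∑ i, x i * y i) + x (Fin.last 3) * t := by
    rw [← sum_mul_smul_vertE x t, ← Finset.sum_add_distrib]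
    exact Finset.sum_congr rfl fun i _ => by simp [mul_add]
  rw [hs]
  have h2 : 0 ≤ x (Fin.last 3) * t := mul_nonneg (hhalf x hx) ht
  linarith

private lemma proj_mem_polarDual {T : Set (Fin 4 → ℝ)} {a : Fin 4 → ℝ} (ha : a ∈ polarDual T) :
    projInit a ∈ polarDual (projInit '' (T ∩ {x | lastCoord x = 0})) := by
  rintro x' ⟨x, ⟨hxT, hx0⟩, rfl⟩
  have h := ha x hxT
  rw [sum_last_split] at h
  have hx0' : x (Fin.last 3) = 0 := hx0
  simpa [projInit, hx0', -Fin.reduceLast] using h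

private lemma exists_tall_vertex {T : Set (Fin 4 → ℝ)} (hT : IsTopPoly T) :
    ∃ v ∈ T, 1 ≤ lastCoord v := by
  obtain ⟨N, hNlat, hNeq⟩ := hT.facets
  set B : ℝ := (∑ n ∈ N, |n (Fin.last 3)|) + 1 with hB
  have hBpos : 0 < B := by
    have : (0:ℝ) ≤ ∑ n ∈ N, |n (Fin.last 3)| :=
      Finset.sum_nonneg fun n _ => abs_nonneg _
    simp only [hB]; linarith
  set x₀ : Fin 4 → ℝ := B⁻¹ • vertE with hx₀
  have hx₀last : lastCoord x₀ = B⁻¹ := by simp [hx₀, lastCoord, vertE]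
  have hx₀T : x₀ ∈ T := by
    rw [hNeq]
    constructor
    · show (0:ℝ) ≤ lastCoord x₀
      rw [hx₀last]; positivity
    · simp only [Set.mem_iInter, Set.mem_setOf_eq]
      intro n hn
      have hsum : ∑ i, n i * x₀ i = n (Fin.last 3) * B⁻¹ := sum_mul_smul_vertE n B⁻¹
      rw [hsum]
      have h1 : |n (Fin.last 3)| ≤ B := by
        have := Finset.single_le_sum (f := fun m => |m (Fin.last 3)|)
          (fun m _ => abs_nonneg _) hn
        simp only [hB]; linarith
      have h2 : -|n (Fin.last 3)| ≤ n (Fin.last 3) := neg_abs_le _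
      have hBinv : 0 < B⁻¹ := by positivity
      have h3 : -|n (Fin.last 3)| * B⁻¹ ≤ n (Fin.last 3) * B⁻¹ :=
        mul_le_mul_of_nonneg_right h2 (le_of_lt hBinv)
      have h4 : -(B * B⁻¹) ≤ -|n (Fin.last 3)| * B⁻¹ := by
        have := mul_le_mul_of_nonneg_right h1 (le_of_lt hBinv)
        linarith
      rw [mul_inv_cancel₀ (ne_of_gt hBpos)] at h4
      linarith
  obtain ⟨V, hVlat, hVeq⟩ := hT.poly
  by_contra hcon
  push_neg at hcon
  have hV0 : ∀ v ∈ V, lastCoord v = 0 := by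
    intro v hv
    have hvT : v ∈ T := by rw [hVeq]; exact subset_convexHull ℝ _ hv
    have h0 : 0 ≤ lastCoord v := hT.halfspace v hvT
    have h1 : lastCoord v < 1 := hcon v hvT
    obtain ⟨m, hm⟩ := hVlat v hv (Fin.last 3)
    have hm' : lastCoord v = (m : ℝ) := hm
    rw [hm'] at h0 h1 ⊢
    have : m = 0 := by exact_mod_cast le_antisymm (by exact_mod_cast Int.lt_add_one_iff.mp (by exact_mod_cast h1)) (by exact_mod_cast h0)
    simp [this]
  have hconv : Convex ℝ {x : Fin 4 → ℝ | lastCoord x = 0} := by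
    intro x hx y hy a b _ _ _
    have hx' : x (Fin.last 3) = 0 := hx
    have hy' : y (Fin.last 3) = 0 := hy
    show (a • x + b • y) (Fin.last 3) = 0
    simp [hx', hy', -Fin.reduceLast]
  have hsub : T ⊆ {x : Fin 4 → ℝ | lastCoord x = 0} := by
    rw [hVeq]
    exact convexHull_min (fun v hv => hV0 v hv) hconv
  have := hsub hx₀T
  rw [Set.mem_setOf_eq, hx₀last] at this
  exact absurd this (by positivity)

/-- The polar dual of a top (given by its facet description) is contained in the sum of the
convex hull of the facet normals together with `0`, plus the vertical ray. -/
private lemma polarDual_subset_hull {T : Set (Fin 4 → ℝ)} {N : Finset (Fin 4 → ℝ)}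
    (hNeq : T = {x | 0 ≤ lastCoord x} ∩ ⋂ n ∈ N, {x | -1 ≤ ∑ i, n i * x i}) :
    polarDual T ⊆ {y | ∃ z ∈ convexHull ℝ ((insert (0 : Fin 4 → ℝ) N : Finset (Fin 4 → ℝ)) :
      Set (Fin 4 → ℝ)), ∃ t : ℝ, 0 ≤ t ∧ y = z + t • vertE} := by
  intro y hy
  set Q : Set (Fin 4 → ℝ) :=
    convexHull ℝ ((insert (0 : Fin 4 → ℝ) N : Finset (Fin 4 → ℝ)) : Set (Fin 4 → ℝ)) with hQ
  set CC : Set (Fin 4 → ℝ) := {c | (∀ i : Fin 3, c i.castSucc = 0) ∧ 0 ≤ c (Fin.last 3)}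
    with hCC
  have h0Q : (0 : Fin 4 → ℝ) ∈ Q := subset_convexHull ℝ _ (by simp)
  have h0CC : (0 : Fin 4 → ℝ) ∈ CC := by constructor <;> simp
  have hvertCC : ∀ t : ℝ, 0 ≤ t → t • vertE ∈ CC := by
    intro t ht
    constructor
    · intro i
      have : (i.castSucc : Fin 4) ≠ Fin.last 3 := (Fin.castSucc_lt_last i).ne
      simp [vertE, this, -Fin.reduceLast]
    · simpa [vertE] using ht
  by_cases hmem : y ∈ Q + CC
  · rw [Set.mem_add] at hmem
    obtain ⟨z, hz, c, hc, hsum⟩ := hmem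
    refine ⟨z, hz, c (Fin.last 3), hc.2, ?_⟩
    rw [← hsum]
    congr 1
    funext i
    induction i using Fin.lastCases with
    | last => simp [vertE]
    | cast j =>
        have : (j.castSucc : Fin 4) ≠ Fin.last 3 := (Fin.castSucc_lt_last j).ne
        simp [vertE, this, hc.1 j, -Fin.reduceLast]
  · exfalso
    have hQconv : Convex ℝ Q := convex_convexHull ℝ _
    have hCconv : Convex ℝ CC := by
      intro c₁ h₁ c₂ h₂ a b ha hb hab
      constructor
      · intro i
        show a * c₁ i.castSucc + b * c₂ i.castSucc = 0
        rw [h₁.1 i, h₂.1 i]; ring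
      · show 0 ≤ a * c₁ (Fin.last 3) + b * c₂ (Fin.last 3)
        have := mul_nonneg ha h₁.2
        have := mul_nonneg hb h₂.2
        linarith
    have hQcomp : IsCompact Q := (Finset.finite_toSet _).isCompact_convexHull ℝ
    have hCclosed : IsClosed CC := by
      have : CC = (⋂ i : Fin 3, {c : Fin 4 → ℝ | c i.castSucc = 0}) ∩
          {c : Fin 4 → ℝ | 0 ≤ c (Fin.last 3)} := by
        ext c; simp [hCC, Set.mem_iInter]
      rw [this]
      exact IsClosed.inter
        (isClosed_iInter fun i => isClosed_eq (continuous_apply _) continuous_const)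
        (isClosed_le continuous_const (continuous_apply _))
    have hclosed : IsClosed (Q + CC) := hCclosed.add_left_of_isCompact hQcomp
    obtain ⟨f, u, hfs, hfy⟩ :=
      geometric_hahn_banach_closed_point (hQconv.add hCconv) hclosed hmem
    have hu0 : 0 < u := by
      have := hfs 0 (by rw [← add_zero (0 : Fin 4 → ℝ)]; exact Set.add_mem_add h0Q h0CC)
      simpa using this
    have hray : ∀ t : ℝ, 0 ≤ t → t * f vertE < u := by
      intro t ht
      have h1 : t • vertE ∈ Q + CC := by
        rw [← zero_add (t • vertE)]; exact Set.add_mem_add h0Q (hvertCC t ht)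
      have := hfs _ h1
      simpa using this
    have hfvert : f vertE ≤ 0 := by
      by_contra h
      push_neg at h
      have := hray ((u + 1) / f vertE) (by positivity)
      rw [div_mul_cancel₀ _ (ne_of_gt h)] at this
      linarith
    have hfN : ∀ n ∈ N, f n < u := by
      intro n hn
      have h1 : n ∈ Q + CC := by
        rw [← add_zero n]
        exact Set.add_mem_add (subset_convexHull ℝ _ (by simp [hn])) h0CC
      exact hfs n h1
    -- coordinates of f
    set g : Fin 4 → ℝ := fun i => f (fun j => if i = j then 1 else 0) with hg
    have hfrep : ∀ z : Fin 4 → ℝ, f z = ∑ i, z i * g i := by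
      intro z
      conv_lhs => rw [pi_eq_sum_univ z]
      rw [map_sum]
      exact Finset.sum_congr rfl fun i _ => by rw [_root_.map_smul]; simp [hg, smul_eq_mul]
    have hglast : g (Fin.last 3) = f vertE := by
      simp only [hg]
      congr 1
      funext j
      simp [vertE, eq_comm]
    -- the separating point, scaled
    set x : Fin 4 → ℝ := (-u⁻¹) • g with hx
    have hxT : x ∈ T := by
      rw [hNeq]
      constructor
      · show (0:ℝ) ≤ x (Fin.last 3)
        have : x (Fin.last 3) = (-u⁻¹) * g (Fin.last 3) := rfl
        rw [this, hglast]
        have : 0 < u⁻¹ := by positivity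
        nlinarith
      · simp only [Set.mem_iInter, Set.mem_setOf_eq]
        intro n hn
        have hsum : ∑ i, n i * x i = (-u⁻¹) * f n := by
          rw [hfrep n, Finset.mul_sum]
          exact Finset.sum_congr rfl fun i _ => by simp [hx, smul_eq_mul]; ring
        rw [hsum]
        have h1 := hfN n hn
        have h2 : 0 < u⁻¹ := by positivity
        have := mul_lt_mul_of_pos_left h1 h2
        rw [inv_mul_cancel₀ (ne_of_gt hu0)] at this
        nlinarith
    have hyx := hy x hxT
    have hsum : ∑ i, x i * y i = (-u⁻¹) * f y := by
      rw [hfrep y, Finset.mul_sum]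
      exact Finset.sum_congr rfl fun i _ => by simp [hx, smul_eq_mul]; ring
    rw [hsum] at hyx
    have h2 : 0 < u⁻¹ := by positivity
    have := mul_lt_mul_of_pos_left hfy h2
    rw [inv_mul_cancel₀ (ne_of_gt hu0)] at this
    nlinarith

/-- If a point `w + t0 • d` on the face line lies in the convex hull of `M`, and every point
of `M` on the face lies on the line through `w` with direction `d`, then some element of `M`
lies on the face at parameter at least `t0`. -/
private lemma extract_far_point {M : Finset (Fin 4 → ℝ)} {f : (Fin 4 → ℝ) → ℝ}
    (hadd : ∀ z₁ z₂, f (z₁ + z₂) = f z₁ + f z₂) (hsmul : ∀ (r : ℝ) z, f (r • z) = r * f z)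
    {c : ℝ} (hM : ∀ m ∈ M, c ≤ f m)
    {w d yp : Fin 4 → ℝ} {t0 : ℝ} (ht0 : 0 < t0)
    (hyp : yp = w + t0 • d)
    (hypQ : yp ∈ convexHull ℝ (M : Set (Fin 4 → ℝ))) (hypc : f yp = c)
    (hline : ∀ z ∈ M, f z = c → ∃ t : ℝ, z = w + t • d) (hd : d ≠ 0) :
    ∃ a ∈ M, f a = c ∧ ∃ α : ℝ, t0 ≤ α ∧ a = w + α • d := by
  have flin : IsLinearMap ℝ f := ⟨hadd, fun r z => by rw [hsmul]; rfl⟩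
  set F : (Fin 4 → ℝ) →ₗ[ℝ] ℝ := IsLinearMap.mk' f flin with hF
  rw [Finset.convexHull_eq] at hypQ
  obtain ⟨wt, hwt0, hwt1, hcm⟩ := hypQ
  set supp : Finset (Fin 4 → ℝ) := M.filter (fun z => wt z ≠ 0) with hsupp
  have hsuppsub : supp ⊆ M := Finset.filter_subset _ _
  have hsuppsum : ∑ s ∈ supp, wt s = 1 := by
    rw [hsupp, Finset.sum_filter_ne_zero, hwt1]
  have hcm' : yp = ∑ s ∈ supp, wt s • s := by
    rw [← hcm, ← Finset.centerMass_filter_ne_zero (z := id)]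
    rw [Finset.centerMass_eq_of_sum_1 _ _ hsuppsum]
    rfl
  have hwpos : ∀ s ∈ supp, 0 < wt s := by
    intro s hs
    rw [hsupp, Finset.mem_filter] at hs
    exact lt_of_le_of_ne (hwt0 s hs.1) (Ne.symm hs.2)
  have hne : supp.Nonempty := by
    rcases Finset.eq_empty_or_nonempty supp with h | h
    · rw [h, Finset.sum_empty] at hsuppsum; norm_num at hsuppsum
    · exact h
  have hfyp : f yp = ∑ s ∈ supp, wt s * f s := by
    rw [hcm']
    show F (∑ s ∈ supp, wt s • s) = _
    rw [map_sum]
    exact Finset.sum_congr rfl fun s _ => by rw [_root_.map_smul]; rfl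
  have hfc : ∀ s ∈ supp, f s = c := by
    by_contra hcon
    push_neg at hcon
    obtain ⟨s₀, hs₀, hs₀ne⟩ := hcon
    have hgt : c < f s₀ := lt_of_le_of_ne (hM s₀ (hsuppsub hs₀)) (Ne.symm hs₀ne)
    have : ∑ s ∈ supp, wt s * c < ∑ s ∈ supp, wt s * f s := by
      apply Finset.sum_lt_sum
      · intro s hs
        exact mul_le_mul_of_nonneg_left (hM s (hsuppsub hs)) (le_of_lt (hwpos s hs))
      · exact ⟨s₀, hs₀, mul_lt_mul_of_pos_left hgt (hwpos s₀ hs₀)⟩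
    rw [← Finset.sum_mul, hsuppsum, one_mul] at this
    rw [hypc] at hfyp
    linarith [hfyp]
  have hts : ∀ s ∈ supp, ∃ t : ℝ, s = w + t • d := fun s hs =>
    hline s (hsuppsub hs) (hfc s hs)
  choose τ hτ using hts
  by_contra hcon
  push_neg at hcon
  have hτlt : ∀ s (hs : s ∈ supp), τ s hs < t0 := by
    intro s hs
    by_contra h
    push_neg at h
    exact hcon s (hsuppsub hs) (hfc s hs) (τ s hs) h (hτ s hs)
  -- compute yp - w two ways
  have hyd : yp - w = t0 • d := by rw [hyp]; abel
  have hattach : ∑ s ∈ supp.attach, wt s.1 = 1 := by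
    rw [Finset.sum_attach]; exact hsuppsum
  have hyd2 : yp - w = (∑ s ∈ supp.attach, wt s.1 * τ s.1 s.2) • d := by
    have h1 : yp = ∑ s ∈ supp.attach, wt s.1 • s.1 := by
      rw [hcm']; exact (Finset.sum_attach supp (fun s => wt s • s)).symm
    have h2 : w = ∑ s ∈ supp.attach, wt s.1 • w := by
      rw [← Finset.sum_smul, hattach, one_smul]
    calc yp - w = ∑ s ∈ supp.attach, (wt s.1 • s.1 - wt s.1 • w) := by
          rw [Finset.sum_sub_distrib, ← h1, ← h2]
      _ = ∑ s ∈ supp.attach, (wt s.1 * τ s.1 s.2) • d := by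
          refine Finset.sum_congr rfl fun s _ => ?_
          rw [← smul_sub]
          have hsw : s.1 - w = τ s.1 s.2 • d := by
            conv_lhs => rw [hτ s.1 s.2]
            abel
          rw [hsw, smul_smul]
      _ = (∑ s ∈ supp.attach, wt s.1 * τ s.1 s.2) • d := by rw [Finset.sum_smul]
  have heq : t0 = ∑ s ∈ supp.attach, wt s.1 * τ s.1 s.2 := by
    have h := hyd.symm.trans hyd2
    exact smul_left_injective ℝ hd h
  have hlt : ∑ s ∈ supp.attach, wt s.1 * τ s.1 s.2 < ∑ s ∈ supp.attach, wt s.1 * t0 := by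
    apply Finset.sum_lt_sum_of_nonempty
    · exact Finset.attach_nonempty_iff.mpr hne
    · intro s _
      exact mul_lt_mul_of_pos_left (hτlt s.1 s.2) (hwpos s.1 s.2)
  rw [← Finset.sum_mul, hattach, one_mul] at hlt
  linarith [heq ▸ hlt]

end Aux

/-- If a three-dimensional reflexive polytope `Δ` is the reflexive boundary
of a four-dimensional short top whose polar dual has `(0,0,0,-1)` in the interior of an
edge, then the origin lies in the interior of a segment joining two lattice points of
`Δ°`. -/
theorem stmt13 (Δ : Set (Fin 3 → ℝ)) (hΔ : IsReflexive Δ)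
    (T : Set (Fin (3+1) → ℝ)) (hT : IsShortTop T)
    (hbdry : projInit '' (T ∩ {x | lastCoord x = 0}) = Δ)
    (F : Set (Fin (3+1) → ℝ)) (hF : IsFace (polarDual T) F 1)
    (hw : negE 3 ∈ intrinsicInterior ℝ F) :
    ∃ p q : Fin 3 → ℝ, p ∈ latticePts (polarDual Δ) ∧ q ∈ latticePts (polarDual Δ) ∧
      p ≠ q ∧ (0 : Fin 3 → ℝ) ∈ openSegment ℝ p q := by
  obtain ⟨hTop, _hshort⟩ := hT
  obtain ⟨nF, c, hn0, hsupp, hFeq, hdim⟩ := hF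
  set P := polarDual T with hP
  set w : Fin 4 → ℝ := negE 3 with hwdef
  have hwF : w ∈ F := intrinsicInterior_subset hw
  have hFP : F ⊆ P := by rw [hFeq]; exact fun x hx => hx.1
  have hwP : w ∈ P := hFP hwF
  have hmemFc : ∀ y' ∈ F, ∑ i, nF i * y' i = c := by
    intro y' hy'
    have : y' ∈ {x ∈ P | ∑ i, nF i * x i = c} := by rw [← hFeq]; exact hy'
    exact this.2
  have hfw : ∑ i, nF i * w i = c := hmemFc w hwF
  have hwcast : ∀ i : Fin 3, w i.castSucc = 0 := by
    intro i
    have h : (i.castSucc : Fin 4) ≠ Fin.last 3 := (Fin.castSucc_lt_last i).ne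
    simp [hwdef, negE, h, -Fin.reduceLast]
  have hwlast : w (Fin.last 3) = -1 := by simp [hwdef, negE]
  -- direction of the edge
  obtain ⟨v, hv0, hvspan⟩ := finrank_eq_one_iff'.mp hdim
  set d : Fin 4 → ℝ := (v : Fin 4 → ℝ) with hd
  have hd0 : d ≠ 0 := fun h => hv0 (by exact_mod_cast Subtype.ext h)
  have hdmem : d ∈ (affineSpan ℝ F).direction := v.2
  have hspan : ∀ u : Fin 4 → ℝ, u ∈ (affineSpan ℝ F).direction → ∃ r : ℝ, u = r • d := by
    intro u hu
    obtain ⟨r, hr⟩ := hvspan ⟨u, hu⟩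
    exact ⟨r, by simpa using congrArg Subtype.val hr.symm⟩
  -- points of F on both sides of w
  obtain ⟨y0, hy0int, hy0w⟩ := hw
  have hγmem : ∀ t : ℝ, w + t • d ∈ affineSpan ℝ F := by
    intro t
    have h1 : t • d ∈ (affineSpan ℝ F).direction := Submodule.smul_mem _ t hdmem
    have h2 := AffineSubspace.vadd_mem_of_mem_direction h1 (subset_affineSpan ℝ F hwF)
    simpa [add_comm] using h2
  set γ : ℝ → (affineSpan ℝ F : Set (Fin 4 → ℝ)) := fun t => ⟨w + t • d, hγmem t⟩ with hγ
  have hγcont : Continuous γ := by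
    apply Continuous.subtype_mk
    exact continuous_const.add (continuous_id.smul continuous_const)
  have hγ0 : γ 0 = y0 := by
    apply Subtype.ext
    simp only [hγ, zero_smul, add_zero]
    exact hy0w.symm
  have hnhds : γ ⁻¹' (interior ((Subtype.val) ⁻¹' F)) ∈ nhds (0:ℝ) := by
    apply (isOpen_interior.preimage hγcont).mem_nhds
    rw [Set.mem_preimage, hγ0]
    exact hy0int
  obtain ⟨ε, hε, hball⟩ := Metric.mem_nhds_iff.mp hnhds
  set t0 : ℝ := ε / 2 with ht0def
  have ht0 : 0 < t0 := by positivity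
  have hmemF : ∀ t : ℝ, |t| < ε → w + t • d ∈ F := by
    intro t ht
    have h1 : γ t ∈ interior ((Subtype.val) ⁻¹' F) :=
      hball (by simpa [Real.dist_eq] using ht)
    have h2 : γ t ∈ (Subtype.val) ⁻¹' F := interior_subset h1
    exact h2
  have hypF : w + t0 • d ∈ F := hmemF t0 (by rw [abs_of_pos ht0]; linarith)
  have hymF : w + (-t0) • d ∈ F := by
    apply hmemF
    rw [abs_neg, abs_of_pos ht0]; linarith
  -- the direction is not vertical
  obtain ⟨vx, hvxT, hvx1⟩ := exists_tall_vertex hTop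
  have hvx1' : 1 ≤ vx (Fin.last 3) := hvx1
  have hprojd : projInit d ≠ 0 := by
    intro hpd
    have hdvert : d = d (Fin.last 3) • vertE := by
      funext i
      induction i using Fin.lastCases with
      | last => simp [vertE]
      | cast j =>
          have hne : (j.castSucc : Fin 4) ≠ Fin.last 3 := (Fin.castSucc_lt_last j).ne
          have h1 : d j.castSucc = 0 := congrFun hpd j
          simp [vertE, hne, h1, -Fin.reduceLast]
    have hdl : d (Fin.last 3) ≠ 0 := by
      intro h; exact hd0 (by rw [hdvert, h, zero_smul])
    set δ : ℝ := t0 * d (Fin.last 3) with hδ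
    have hδ0 : δ ≠ 0 := mul_ne_zero (ne_of_gt ht0) hdl
    have hzF : w + (-|δ|) • vertE ∈ F := by
      rcases lt_or_gt_of_ne hδ0 with h | h
      · have heq : w + t0 • d = w + (-|δ|) • vertE := by
          rw [hdvert, smul_smul, ← hδ, abs_of_neg h, neg_neg]
        rw [← heq]; exact hypF
      · have heq : w + (-t0) • d = w + (-|δ|) • vertE := by
          rw [hdvert, smul_smul, abs_of_pos h]
          congr 1
          rw [hδ]; ring_nf
        rw [← heq]; exact hymF
    have hzP : w + (-|δ|) • vertE ∈ P := hFP hzF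
    have hcontr := hzP vx hvxT
    have hzcast : ∀ i : Fin 3, (w + (-|δ|) • vertE) i.castSucc = 0 := by
      intro i
      have hne : (i.castSucc : Fin 4) ≠ Fin.last 3 := (Fin.castSucc_lt_last i).ne
      simp [vertE, hne, hwcast i, -Fin.reduceLast]
    have hzlast : (w + (-|δ|) • vertE) (Fin.last 3) = -1 - |δ| := by
      simp [vertE, hwlast, -Fin.reduceLast]
      ring
    rw [sum_last_split, Finset.sum_eq_zero (fun i _ => by rw [hzcast i, mul_zero]),
      hzlast] at hcontr
    have habs : 0 < |δ| := abs_pos.mpr hδ0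
    nlinarith
  -- facet normals
  obtain ⟨N, hNlat, hNeq⟩ := hTop.facets
  set M : Finset (Fin 4 → ℝ) := insert 0 N with hM
  have hMP : ∀ m ∈ M, m ∈ P := by
    intro m hm
    rw [hM, Finset.mem_insert] at hm
    rcases hm with rfl | hm
    · intro x _; simp
    · intro x hx
      rw [hNeq] at hx
      have h1 : -1 ≤ ∑ i, m i * x i := by
        have := hx.2
        rw [Set.mem_iInter₂] at this
        exact this m hm
      calc (-1 : ℝ) ≤ ∑ i, m i * x i := h1
        _ = ∑ i, x i * m i := Finset.sum_congr rfl fun i _ => mul_comm _ _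
  have hQP : convexHull ℝ (M : Set (Fin 4 → ℝ)) ⊆ P :=
    convexHull_min (fun m hm => hMP m hm) (polarDual_convex T)
  have hnFlast : 0 ≤ nF (Fin.last 3) := by
    have h1 : w + (1:ℝ) • vertE ∈ P := polarDual_vadd_vert hTop.halfspace hwP zero_le_one
    have h2 := hsupp _ h1
    have h3 : ∑ i, nF i * (w + (1:ℝ) • vertE) i
        = (∑ i, nF i * w i) + nF (Fin.last 3) * 1 := by
      rw [← sum_mul_smul_vertE nF 1, ← Finset.sum_add_distrib]
      exact Finset.sum_congr rfl fun i _ => by simp [mul_add]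
    rw [h3, hfw] at h2
    linarith
  -- every point of the edge lies in the hull of M
  have hdecomp : ∀ y' ∈ F, y' ∈ convexHull ℝ (M : Set (Fin 4 → ℝ)) := by
    intro y' hy'F
    have hy'P : y' ∈ P := hFP hy'F
    obtain ⟨z, hzQ, t, ht, hyzt⟩ := polarDual_subset_hull hNeq hy'P
    have hfy' : ∑ i, nF i * y' i = c := hmemFc y' hy'F
    have hfz : c ≤ ∑ i, nF i * z i := hsupp z (hQP hzQ)
    have hsplit : ∑ i, nF i * y' i = (∑ i, nF i * z i) + nF (Fin.last 3) * t := by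
      rw [hyzt, ← sum_mul_smul_vertE nF t, ← Finset.sum_add_distrib]
      exact Finset.sum_congr rfl fun i _ => by simp [mul_add]
    have htnn : 0 ≤ nF (Fin.last 3) * t := mul_nonneg hnFlast ht
    have hfz' : ∑ i, nF i * z i = c := by rw [hfy'] at hsplit; linarith
    have hzF : z ∈ F := by rw [hFeq]; exact ⟨hQP hzQ, hfz'⟩
    have hdiff : y' - z ∈ (affineSpan ℝ F).direction := by
      have := AffineSubspace.vsub_mem_direction (subset_affineSpan ℝ F hy'F)
        (subset_affineSpan ℝ F hzF)
      simpa using this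
    obtain ⟨r, hr⟩ := hspan _ hdiff
    have hproj0 : r • projInit d = 0 := by
      have h1 : y' - z = t • vertE := by rw [hyzt]; abel
      have h2 : projInit (y' - z) = r • projInit d := by
        rw [hr]; funext i; simp [projInit]
      rw [h1] at h2
      rw [← h2]
      funext i
      have hne : (i.castSucc : Fin 4) ≠ Fin.last 3 := (Fin.castSucc_lt_last i).ne
      simp [projInit, vertE, hne, -Fin.reduceLast]
    have hr0 : r = 0 := by
      rcases smul_eq_zero.mp hproj0 with h | h
      · exact h
      · exact absurd h hprojd
    have hyz : y' = z := by
      have h1 : y' - z = 0 := by rw [hr, hr0, zero_smul]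
      exact sub_eq_zero.mp h1
    rw [hyz]; exact hzQ
  -- linearity facts for the functional
  have hadd : ∀ z₁ z₂ : Fin 4 → ℝ,
      (∑ i, nF i * (z₁ + z₂) i) = (∑ i, nF i * z₁ i) + ∑ i, nF i * z₂ i := by
    intro z₁ z₂
    rw [← Finset.sum_add_distrib]
    exact Finset.sum_congr rfl fun i _ => by simp [mul_add]
  have hsmul : ∀ (r : ℝ) (z : Fin 4 → ℝ), (∑ i, nF i * (r • z) i) = r * ∑ i, nF i * z i := by
    intro r z
    rw [Finset.mul_sum]
    exact Finset.sum_congr rfl fun i _ => by simp [smul_eq_mul]; ring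
  have hMc : ∀ m ∈ M, c ≤ ∑ i, nF i * m i := fun m hm => hsupp m (hMP m hm)
  have hline : ∀ z ∈ M, (∑ i, nF i * z i) = c → ∃ t : ℝ, z = w + t • d := by
    intro z hz hzc
    have hzF : z ∈ F := by rw [hFeq]; exact ⟨hMP z hz, hzc⟩
    have hdiff : z - w ∈ (affineSpan ℝ F).direction := by
      have := AffineSubspace.vsub_mem_direction (subset_affineSpan ℝ F hzF)
        (subset_affineSpan ℝ F hwF)
      simpa using this
    obtain ⟨r, hr⟩ := hspan _ hdiff
    exact ⟨r, by rw [← hr]; abel⟩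
  have hline' : ∀ z ∈ M, (∑ i, nF i * z i) = c → ∃ t : ℝ, z = w + t • (-d) := by
    intro z hz hzc
    obtain ⟨t, ht⟩ := hline z hz hzc
    exact ⟨-t, by rw [ht, smul_neg, neg_smul, neg_neg]⟩
  -- the two endpoints
  obtain ⟨a, haM, hfa, α, hα, ha⟩ := extract_far_point hadd hsmul hMc ht0 rfl
    (hdecomp _ hypF) (hmemFc _ hypF) hline hd0
  obtain ⟨b, hbM, hfb, β, hβ, hb⟩ := extract_far_point hadd hsmul hMc ht0
    (by rw [smul_neg, ← neg_smul] : w + (-t0) • d = w + t0 • (-d))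
    (hdecomp _ hymF) (hmemFc _ hymF) hline' (neg_ne_zero.mpr hd0)
  have hb' : b = w - β • d := by rw [hb, smul_neg, sub_eq_add_neg]
  have hα0 : 0 < α := lt_of_lt_of_le ht0 hα
  have hβ0 : 0 < β := lt_of_lt_of_le ht0 hβ
  have hαβ : 0 < α + β := by linarith
  have hlat : ∀ m ∈ M, IsLatticePt m := by
    intro m hm
    rw [hM, Finset.mem_insert] at hm
    rcases hm with rfl | hm
    · intro i; exact ⟨0, by simp⟩
    · exact hNlat m hm
  refine ⟨projInit a, projInit b, ⟨?_, ?_⟩, ⟨?_, ?_⟩, ?_, ?_⟩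
  · rw [← hbdry]; exact proj_mem_polarDual (hMP a haM)
  · intro i; exact hlat a haM i.castSucc
  · rw [← hbdry]; exact proj_mem_polarDual (hMP b hbM)
  · intro i; exact hlat b hbM i.castSucc
  · -- projInit a ≠ projInit b
    intro h
    have h2 : a - b = (α + β) • d := by
      rw [ha, hb']; funext i
      simp only [Pi.sub_apply, Pi.add_apply, Pi.smul_apply, smul_eq_mul]
      ring
    have h3 : projInit (a - b) = (α + β) • projInit d := by
      rw [h2]; funext i; simp [projInit]
    have h4 : projInit (a - b) = 0 := by
      funext i
      have := congrFun h i
      simpa [projInit] using sub_eq_zero.mpr this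
    rw [h4] at h3
    rcases smul_eq_zero.mp h3.symm with h5 | h5
    · linarith
    · exact hprojd h5
  · -- 0 ∈ openSegment
    refine ⟨β / (α + β), α / (α + β), div_pos hβ0 hαβ, div_pos hα0 hαβ, ?_, ?_⟩
    · field_simp; ring
    · have hcomb : (β / (α + β)) • a + (α / (α + β)) • b = w := by
        rw [ha, hb']; funext i
        simp only [Pi.add_apply, Pi.smul_apply, Pi.sub_apply, smul_eq_mul]
        field_simp
        ring
      have hproj : (β / (α + β)) • projInit a + (α / (α + β)) • projInit b
          = projInit ((β / (α + β)) • a + (α / (α + β)) • b) := by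
        funext i; simp [projInit]
      rw [hproj, hcomb]
      funext i
      exact hwcast i

end SemistableTops
end
end

section
/- Up to lattice isomorphism fixing the reflexive boundary, the octahedron Δ° with vertices ±e_1, ±e_2, ±e_3 has a unique decomposition into two three-dimensional tops glued along a common two-dimensional reflexive polygon: the split into the halves x_3 ≥ 0 and x_3 ≤ 0, each half being isomorphic to a top with square reflexive boundary. -/
open Finset Matrix Pointwise
open scoped Classical

noncomputable section

namespace SemistableTops

/-- The vertices `±e₁, ±e₂, ±e₃` of the standard octahedron. -/
def octaVerts : Finset (Fin 3 → ℝ) :=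
  {![1,0,0], ![-1,0,0], ![0,1,0], ![0,-1,0], ![0,0,1], ![0,0,-1]}

/-- The standard octahedron in `ℝ³`. -/
def octa : Set (Fin 3 → ℝ) := convexHull ℝ (octaVerts : Set (Fin 3 → ℝ))

/-- A decomposition of the octahedron into two tops glued along a common two-dimensional
reflexive polygon through the origin, cut by the hyperplane `m ⬝ x = 0`. -/
def OctDecomp (m : Fin 3 → ℤ) : Prop :=
  m ≠ 0 ∧
  (∃ (φ : (Fin 3 → ℝ) → (Fin 3 → ℝ)) (Q : Set (Fin 2 → ℝ)),
    UnimodularMap φ ∧ IsReflexive Q ∧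
    φ '' (octa ∩ {x | ∑ i, (m i : ℝ) * x i = 0})
      = (fun v => (Fin.snoc v 0 : Fin (2+1) → ℝ)) '' Q) ∧
  (∃ φA : (Fin 3 → ℝ) → (Fin 3 → ℝ), UnimodularMap φA ∧
    IsTopPoly (k := 2) (φA '' (octa ∩ {x | 0 ≤ ∑ i, (m i : ℝ) * x i}))) ∧
  (∃ φB : (Fin 3 → ℝ) → (Fin 3 → ℝ), UnimodularMap φB ∧
    IsTopPoly (k := 2) (φB '' (octa ∩ {x | ∑ i, (m i : ℝ) * x i ≤ 0})))

/-! ### Helpers -/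

@[simp] lemma vec3_two' {α : Type*} (a b c : α) : (![a, b, c] : Fin 3 → α) 2 = c := rfl

lemma mem_hull_of_weights {k n : ℕ} {S : Set (Fin k → ℝ)} (z : Fin n → (Fin k → ℝ))
    (hz : ∀ i, z i ∈ S) (w : Fin n → ℝ) (hw0 : ∀ i, 0 ≤ w i) (hw1 : ∑ i, w i = 1)
    (x : Fin k → ℝ) (hx : ∀ j, ∑ i, w i * z i j = x j) : x ∈ convexHull ℝ S := by
  have h := Finset.centerMass_mem_convexHull Finset.univ (w := w) (z := z)
    (fun i _ => hw0 i) (by rw [hw1]; norm_num) (fun i _ => hz i)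
  rwa [Finset.centerMass_eq_of_sum_1 _ _ hw1,
    show (∑ i, w i • z i) = x from funext fun j => by
      simpa [Finset.sum_apply] using hx j] at h

lemma mem_hull6 {k : ℕ} {S : Set (Fin k → ℝ)} {v0 v1 v2 v3 v4 v5 : Fin k → ℝ}
    (h0 : v0 ∈ S) (h1 : v1 ∈ S) (h2 : v2 ∈ S) (h3 : v3 ∈ S) (h4 : v4 ∈ S) (h5 : v5 ∈ S)
    {w0 w1 w2 w3 w4 w5 : ℝ} (g0 : 0 ≤ w0) (g1 : 0 ≤ w1) (g2 : 0 ≤ w2) (g3 : 0 ≤ w3)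
    (g4 : 0 ≤ w4) (g5 : 0 ≤ w5) (hsum : w0 + w1 + w2 + w3 + w4 + w5 = 1)
    {x : Fin k → ℝ}
    (hx : ∀ j, w0 * v0 j + w1 * v1 j + w2 * v2 j + w3 * v3 j + w4 * v4 j + w5 * v5 j = x j) :
    x ∈ convexHull ℝ S := by
  refine mem_hull_of_weights (n := 6) ![v0,v1,v2,v3,v4,v5] ?_ ![w0,w1,w2,w3,w4,w5] ?_ ?_ x ?_
  · simp only [Fin.forall_fin_succ, Matrix.cons_val_zero, Matrix.cons_val_succ]
    simp [h0, h1, h2, h3, h4, h5]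
  · simp only [Fin.forall_fin_succ, Matrix.cons_val_zero, Matrix.cons_val_succ]
    simp [g0, g1, g2, g3, g4, g5]
  · simp only [Fin.sum_univ_succ, Matrix.cons_val_zero, Matrix.cons_val_succ]
    simp; linarith
  · intro j
    simp only [Fin.sum_univ_succ, Matrix.cons_val_zero, Matrix.cons_val_succ]
    simp; linarith [hx j]

lemma mem_hull5 {k : ℕ} {S : Set (Fin k → ℝ)} {v0 v1 v2 v3 v4 : Fin k → ℝ}
    (h0 : v0 ∈ S) (h1 : v1 ∈ S) (h2 : v2 ∈ S) (h3 : v3 ∈ S) (h4 : v4 ∈ S)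
    {w0 w1 w2 w3 w4 : ℝ} (g0 : 0 ≤ w0) (g1 : 0 ≤ w1) (g2 : 0 ≤ w2) (g3 : 0 ≤ w3)
    (g4 : 0 ≤ w4) (hsum : w0 + w1 + w2 + w3 + w4 = 1)
    {x : Fin k → ℝ}
    (hx : ∀ j, w0 * v0 j + w1 * v1 j + w2 * v2 j + w3 * v3 j + w4 * v4 j = x j) :
    x ∈ convexHull ℝ S := by
  refine mem_hull_of_weights (n := 5) ![v0,v1,v2,v3,v4] ?_ ![w0,w1,w2,w3,w4] ?_ ?_ x ?_
  · simp only [Fin.forall_fin_succ, Matrix.cons_val_zero, Matrix.cons_val_succ]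
    simp [h0, h1, h2, h3, h4]
  · simp only [Fin.forall_fin_succ, Matrix.cons_val_zero, Matrix.cons_val_succ]
    simp [g0, g1, g2, g3, g4]
  · simp only [Fin.sum_univ_succ, Matrix.cons_val_zero, Matrix.cons_val_succ]
    simp; linarith
  · intro j
    simp only [Fin.sum_univ_succ, Matrix.cons_val_zero, Matrix.cons_val_succ]
    simp; linarith [hx j]

lemma mem_hull4 {k : ℕ} {S : Set (Fin k → ℝ)} {v0 v1 v2 v3 : Fin k → ℝ}
    (h0 : v0 ∈ S) (h1 : v1 ∈ S) (h2 : v2 ∈ S) (h3 : v3 ∈ S)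
    {w0 w1 w2 w3 : ℝ} (g0 : 0 ≤ w0) (g1 : 0 ≤ w1) (g2 : 0 ≤ w2) (g3 : 0 ≤ w3)
    (hsum : w0 + w1 + w2 + w3 = 1)
    {x : Fin k → ℝ}
    (hx : ∀ j, w0 * v0 j + w1 * v1 j + w2 * v2 j + w3 * v3 j = x j) :
    x ∈ convexHull ℝ S := by
  refine mem_hull_of_weights (n := 4) ![v0,v1,v2,v3] ?_ ![w0,w1,w2,w3] ?_ ?_ x ?_
  · simp only [Fin.forall_fin_succ, Matrix.cons_val_zero, Matrix.cons_val_succ]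
    simp [h0, h1, h2, h3]
  · simp only [Fin.forall_fin_succ, Matrix.cons_val_zero, Matrix.cons_val_succ]
    simp [g0, g1, g2, g3]
  · simp only [Fin.sum_univ_succ, Matrix.cons_val_zero, Matrix.cons_val_succ]
    simp; linarith
  · intro j
    simp only [Fin.sum_univ_succ, Matrix.cons_val_zero, Matrix.cons_val_succ]
    simp; linarith [hx j]

lemma lastCoord_eq (x : Fin 3 → ℝ) : lastCoord x = x 2 := rfl

lemma snoc3 (y : Fin 2 → ℝ) : (Fin.snoc y 0 : Fin 3 → ℝ) = ![y 0, y 1, 0] := by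
  funext j
  fin_cases j <;> simp [Fin.snoc] <;> rfl

lemma fmk0 : (⟨0, by omega⟩ : Fin 3) = 0 := rfl
lemma fmk1 : (⟨1, by omega⟩ : Fin 3) = 1 := rfl
lemma fmk2 : (⟨2, by omega⟩ : Fin 3) = 2 := rfl
lemma gmk0 : (⟨0, by omega⟩ : Fin 2) = 0 := rfl
lemma gmk1 : (⟨1, by omega⟩ : Fin 2) = 1 := rfl
lemma vert_mem (v : Fin 3 → ℝ) (hv : v ∈ octaVerts) : v ∈ octa :=
  subset_convexHull ℝ _ hv

/-- The octahedron is the ℓ¹ ball. -/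
lemma octa_eq : octa = {x : Fin 3 → ℝ | |x 0| + |x 1| + |x 2| ≤ 1} := by
  apply Set.Subset.antisymm
  · apply convexHull_min
    · intro v hv
      simp only [octaVerts, Finset.coe_insert, Set.mem_insert_iff, Finset.coe_singleton,
        Set.mem_singleton_iff] at hv
      rcases hv with h|h|h|h|h|h <;> subst h <;> norm_num
    · intro a ha b hb s t hs ht hst
      simp only [Set.mem_setOf_eq] at *
      have key : ∀ u : Fin 3, |(s • a + t • b) u| ≤ s * |a u| + t * |b u| := by
        intro u
        simp only [Pi.add_apply, Pi.smul_apply, smul_eq_mul]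
        calc |s * a u + t * b u| ≤ |s * a u| + |t * b u| := abs_add_le _ _
        _ = s * |a u| + t * |b u| := by rw [abs_mul, abs_mul, abs_of_nonneg hs, abs_of_nonneg ht]
      have := key 0; have := key 1; have := key 2
      nlinarith
  · intro x hx
    simp only [Set.mem_setOf_eq] at hx
    set s : ℝ := 1 - (|x 0| + |x 1| + |x 2|) with hs
    have hs0 : 0 ≤ s := by linarith
    have m : ∀ v ∈ octaVerts, v ∈ (octaVerts : Set (Fin 3 → ℝ)) := fun v hv => hv
    rw [octa]
    refine mem_hull6 (v0 := ![1,0,0]) (v1 := ![-1,0,0]) (v2 := ![0,1,0]) (v3 := ![0,-1,0])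
      (v4 := ![0,0,1]) (v5 := ![0,0,-1])
      (m _ (by simp [octaVerts])) (m _ (by simp [octaVerts])) (m _ (by simp [octaVerts]))
      (m _ (by simp [octaVerts])) (m _ (by simp [octaVerts])) (m _ (by simp [octaVerts]))
      (w0 := (x 0 + |x 0| + s)/2) (w1 := (-(x 0) + |x 0| + s)/2)
      (w2 := (x 1 + |x 1|)/2) (w3 := (-(x 1) + |x 1|)/2)
      (w4 := (x 2 + |x 2|)/2) (w5 := (-(x 2) + |x 2|)/2)
      (by nlinarith [neg_abs_le (x 0)]) (by nlinarith [le_abs_self (x 0)])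
      (by nlinarith [neg_abs_le (x 1)]) (by nlinarith [le_abs_self (x 1)])
      (by nlinarith [neg_abs_le (x 2)]) (by nlinarith [le_abs_self (x 2)])
      (by rw [hs]; ring) ?_
    intro j
    fin_cases j <;> simp only [fmk0, fmk1, fmk2] <;> norm_num <;> ring
lemma isLatticePt_of_int {k : ℕ} (x : Fin k → ℝ) (n : Fin k → ℤ) (h : ∀ i, x i = n i) :
    IsLatticePt x := fun i => ⟨n i, h i⟩

lemma sum2_linear (y : Fin 2 → ℝ) : IsLinearMap ℝ (fun x : Fin 2 → ℝ => ∑ i, x i * y i) := by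
  constructor
  · intro a b; simp [Fin.sum_univ_two]; ring
  · intro c a; simp [Fin.sum_univ_two]; ring

lemma coord_linear {k : ℕ} (j : Fin k) : IsLinearMap ℝ (fun x : Fin k → ℝ => x j) :=
  ⟨fun _ _ => rfl, fun _ _ => rfl⟩

/-- The diamond (2D reflexive square) is the 2D ℓ¹ ball. -/
lemma square_eq :
    convexHull ℝ ({![1,0], ![-1,0], ![0,1], ![0,-1]} : Set (Fin 2 → ℝ))
      = {y : Fin 2 → ℝ | |y 0| + |y 1| ≤ 1} := by
  apply Set.Subset.antisymm
  · apply convexHull_min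
    · intro v hv
      simp only [Set.mem_insert_iff, Set.mem_singleton_iff] at hv
      rcases hv with h|h|h|h <;> subst h <;> norm_num
    · intro a ha b hb s t hs ht hst
      simp only [Set.mem_setOf_eq] at *
      have key : ∀ u : Fin 2, |(s • a + t • b) u| ≤ s * |a u| + t * |b u| := by
        intro u
        simp only [Pi.add_apply, Pi.smul_apply, smul_eq_mul]
        calc |s * a u + t * b u| ≤ |s * a u| + |t * b u| := abs_add_le _ _
        _ = s * |a u| + t * |b u| := by rw [abs_mul, abs_mul, abs_of_nonneg hs, abs_of_nonneg ht]
      have := key 0; have := key 1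
      nlinarith
  · intro y hy
    simp only [Set.mem_setOf_eq] at hy
    set s : ℝ := 1 - (|y 0| + |y 1|) with hs
    have hs0 : 0 ≤ s := by linarith
    refine mem_hull4 (v0 := ![1,0]) (v1 := ![-1,0]) (v2 := ![0,1]) (v3 := ![0,-1])
      (by simp) (by simp) (by simp) (by simp)
      (w0 := (y 0 + |y 0| + s)/2) (w1 := (-(y 0) + |y 0| + s)/2)
      (w2 := (y 1 + |y 1|)/2) (w3 := (-(y 1) + |y 1|)/2)
      (by nlinarith [neg_abs_le (y 0)]) (by nlinarith [le_abs_self (y 0)])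
      (by nlinarith [neg_abs_le (y 1)]) (by nlinarith [le_abs_self (y 1)])
      (by rw [hs]; ring) ?_
    intro j
    fin_cases j <;> simp only [gmk0, gmk1] <;> norm_num <;> ring
/-- The box `[-1,1]²` is the hull of its corners. -/
lemma box_eq :
    convexHull ℝ ({![1,1], ![1,-1], ![-1,1], ![-1,-1]} : Set (Fin 2 → ℝ))
      = {y : Fin 2 → ℝ | |y 0| ≤ 1 ∧ |y 1| ≤ 1} := by
  apply Set.Subset.antisymm
  · apply convexHull_min
    · intro v hv
      simp only [Set.mem_insert_iff, Set.mem_singleton_iff] at hv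
      rcases hv with h|h|h|h <;> subst h <;> norm_num
    · intro a ha b hb s t hs ht hst
      simp only [Set.mem_setOf_eq] at *
      have key : ∀ u : Fin 2, |(s • a + t • b) u| ≤ s * |a u| + t * |b u| := by
        intro u
        simp only [Pi.add_apply, Pi.smul_apply, smul_eq_mul]
        calc |s * a u + t * b u| ≤ |s * a u| + |t * b u| := abs_add_le _ _
        _ = s * |a u| + t * |b u| := by rw [abs_mul, abs_mul, abs_of_nonneg hs, abs_of_nonneg ht]
      have := key 0; have := key 1
      constructor <;> nlinarith [ha.1, ha.2, hb.1, hb.2]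
  · intro y hy
    simp only [Set.mem_setOf_eq] at hy
    obtain ⟨h0, h1⟩ := hy
    rw [abs_le] at h0 h1
    refine mem_hull4 (v0 := ![1,1]) (v1 := ![1,-1]) (v2 := ![-1,1]) (v3 := ![-1,-1])
      (by simp) (by simp) (by simp) (by simp)
      (w0 := (1 + y 0) * (1 + y 1) / 4) (w1 := (1 + y 0) * (1 - y 1) / 4)
      (w2 := (1 - y 0) * (1 + y 1) / 4) (w3 := (1 - y 0) * (1 - y 1) / 4)
      (by nlinarith [h0.1, h1.1]) (by nlinarith [h0.1, h1.2])
      (by nlinarith [h0.2, h1.1]) (by nlinarith [h0.2, h1.2])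
      (by ring) ?_
    intro j
    fin_cases j <;> simp only [gmk0, gmk1] <;> norm_num <;> ring

/-- The polar dual of the diamond is the box. -/
lemma polar_diamond :
    polarDual (convexHull ℝ ({![1,0], ![-1,0], ![0,1], ![0,-1]} : Set (Fin 2 → ℝ)))
      = {y : Fin 2 → ℝ | |y 0| ≤ 1 ∧ |y 1| ≤ 1} := by
  ext y
  simp only [polarDual, Set.mem_setOf_eq]
  constructor
  · intro h
    have m : ∀ v ∈ ({![1,0], ![-1,0], ![0,1], ![0,-1]} : Set (Fin 2 → ℝ)),
        -1 ≤ ∑ i, v i * y i := fun v hv => h v (subset_convexHull ℝ _ hv)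
    have k0 := m ![1,0] (by simp)
    have k1 := m ![-1,0] (by simp)
    have k2 := m ![0,1] (by simp)
    have k3 := m ![0,-1] (by simp)
    simp only [Fin.sum_univ_two] at k0 k1 k2 k3
    norm_num at k0 k1 k2 k3
    constructor <;> rw [abs_le] <;> constructor <;> linarith
  · intro ⟨h0, h1⟩ x hx
    rw [abs_le] at h0 h1
    have hconv : Convex ℝ {x : Fin 2 → ℝ | -1 ≤ ∑ i, x i * y i} :=
      convex_halfSpace_ge (sum2_linear y) (-1)
    refine convexHull_min ?_ hconv hx
    intro v hv
    simp only [Set.mem_insert_iff, Set.mem_singleton_iff] at hv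
    rcases hv with h|h|h|h <;> subst h <;>
      simp only [Set.mem_setOf_eq, Fin.sum_univ_two] <;> norm_num <;> linarith

/-- The diamond is reflexive. -/
lemma diamond_reflexive :
    IsReflexive (convexHull ℝ ({![1,0], ![-1,0], ![0,1], ![0,-1]} : Set (Fin 2 → ℝ))) := by
  refine ⟨⟨({![1,0], ![-1,0], ![0,1], ![0,-1]} : Finset (Fin 2 → ℝ)), ?_, by
    congr 1; simp⟩, ?_, ?_⟩
  · intro v hv
    simp only [Finset.mem_insert, Finset.mem_singleton] at hv
    rcases hv with h|h|h|h <;> subst h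
    · exact isLatticePt_of_int _ ![1,0] (by intro i; fin_cases i <;> norm_num)
    · exact isLatticePt_of_int _ ![-1,0] (by intro i; fin_cases i <;> norm_num)
    · exact isLatticePt_of_int _ ![0,1] (by intro i; fin_cases i <;> norm_num)
    · exact isLatticePt_of_int _ ![0,-1] (by intro i; fin_cases i <;> norm_num)
  · rw [square_eq]; norm_num
  · rw [polar_diamond, ← box_eq]
    refine ⟨({![1,1], ![1,-1], ![-1,1], ![-1,-1]} : Finset (Fin 2 → ℝ)), ?_, by
      congr 1; simp⟩
    intro v hv
    simp only [Finset.mem_insert, Finset.mem_singleton] at hv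
    rcases hv with h|h|h|h <;> subst h
    · exact isLatticePt_of_int _ ![1,1] (by intro i; fin_cases i <;> norm_num)
    · exact isLatticePt_of_int _ ![1,-1] (by intro i; fin_cases i <;> norm_num)
    · exact isLatticePt_of_int _ ![-1,1] (by intro i; fin_cases i <;> norm_num)
    · exact isLatticePt_of_int _ ![-1,-1] (by intro i; fin_cases i <;> norm_num)
lemma sum3 (n x : Fin 3 → ℝ) : (∑ i, n i * x i) = n 0 * x 0 + n 1 * x 1 + n 2 * x 2 := by
  simp [Fin.sum_univ_three]

/-- The upper half of the octahedron is a pyramid. -/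
lemma half_eq : octa ∩ {x : Fin 3 → ℝ | 0 ≤ x 2}
    = convexHull ℝ ({![1,0,0], ![-1,0,0], ![0,1,0], ![0,-1,0], ![0,0,1]} : Set (Fin 3 → ℝ)) := by
  apply Set.Subset.antisymm
  · rintro x ⟨hx, hx2⟩
    rw [octa_eq] at hx
    simp only [Set.mem_setOf_eq] at hx hx2
    have habs2 : |x 2| = x 2 := abs_of_nonneg hx2
    set s : ℝ := 1 - (|x 0| + |x 1| + x 2) with hs
    have hs0 : 0 ≤ s := by rw [hs]; linarith
    refine mem_hull5 (v0 := ![1,0,0]) (v1 := ![-1,0,0]) (v2 := ![0,1,0]) (v3 := ![0,-1,0])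
      (v4 := ![0,0,1]) (by simp) (by simp) (by simp) (by simp) (by simp)
      (w0 := (x 0 + |x 0| + s)/2) (w1 := (-(x 0) + |x 0| + s)/2)
      (w2 := (x 1 + |x 1|)/2) (w3 := (-(x 1) + |x 1|)/2) (w4 := x 2)
      (by nlinarith [neg_abs_le (x 0)]) (by nlinarith [le_abs_self (x 0)])
      (by nlinarith [neg_abs_le (x 1)]) (by nlinarith [le_abs_self (x 1)])
      hx2 (by rw [hs]; ring) ?_
    intro j
    fin_cases j <;> simp only [fmk0, fmk1, fmk2] <;> norm_num <;> ring
  · apply convexHull_min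
    · intro v hv
      simp only [Set.mem_insert_iff, Set.mem_singleton_iff] at hv
      rcases hv with h|h|h|h|h <;> subst h <;>
        exact ⟨by rw [octa_eq]; norm_num, by norm_num⟩
    · exact (convex_convexHull ℝ _).inter (convex_halfSpace_ge (coord_linear 2) 0)

/-- The boundary of the half octahedron projects to the diamond. -/
lemma proj_eq :
    projInit (k := 2) '' ((octa ∩ {x | 0 ≤ x 2}) ∩ {x | lastCoord (k := 2) x = 0})
      = convexHull ℝ ({![1,0], ![-1,0], ![0,1], ![0,-1]} : Set (Fin 2 → ℝ)) := by
  rw [square_eq]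
  ext y
  constructor
  · rintro ⟨x, ⟨⟨hx, _⟩, h0⟩, rfl⟩
    rw [octa_eq] at hx
    simp only [Set.mem_setOf_eq, lastCoord_eq] at hx h0
    have : |x 2| = 0 := by rw [h0]; simp
    have e0 : projInit (k := 2) x 0 = x 0 := rfl
    have e1 : projInit (k := 2) x 1 = x 1 := rfl
    simp only [Set.mem_setOf_eq, e0, e1]
    linarith
  · intro hy
    simp only [Set.mem_setOf_eq] at hy
    refine ⟨![y 0, y 1, 0], ⟨⟨?_, ?_⟩, ?_⟩, ?_⟩
    · rw [octa_eq]; simp only [Set.mem_setOf_eq]; norm_num; linarith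
    · norm_num
    · simp only [Set.mem_setOf_eq, lastCoord_eq]; norm_num
    · funext i; fin_cases i <;> rfl

/-- The upper half of the octahedron is a top. -/
lemma top_half : IsTopPoly (k := 2) (octa ∩ {x | 0 ≤ x 2}) := by
  constructor
  · refine ⟨({![1,0,0], ![-1,0,0], ![0,1,0], ![0,-1,0], ![0,0,1]} : Finset (Fin 3 → ℝ)), ?_, by
      rw [half_eq]; congr 1; simp⟩
    intro v hv
    simp only [Finset.mem_insert, Finset.mem_singleton] at hv
    rcases hv with h|h|h|h|h <;> subst h
    · exact isLatticePt_of_int _ ![1,0,0] (by intro i; fin_cases i <;> norm_num)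
    · exact isLatticePt_of_int _ ![-1,0,0] (by intro i; fin_cases i <;> norm_num)
    · exact isLatticePt_of_int _ ![0,1,0] (by intro i; fin_cases i <;> norm_num)
    · exact isLatticePt_of_int _ ![0,-1,0] (by intro i; fin_cases i <;> norm_num)
    · exact isLatticePt_of_int _ ![0,0,1] (by intro i; fin_cases i <;> norm_num)
  · rintro x ⟨_, hx2⟩; rw [lastCoord_eq]; exact hx2
  · refine ⟨({![1,1,-1], ![1,-1,-1], ![-1,1,-1], ![-1,-1,-1]} : Finset (Fin 3 → ℝ)), ?_, ?_⟩
    · intro v hv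
      simp only [Finset.mem_insert, Finset.mem_singleton] at hv
      rcases hv with h|h|h|h <;> subst h
      · exact isLatticePt_of_int _ ![1,1,-1] (by intro i; fin_cases i <;> norm_num)
      · exact isLatticePt_of_int _ ![1,-1,-1] (by intro i; fin_cases i <;> norm_num)
      · exact isLatticePt_of_int _ ![-1,1,-1] (by intro i; fin_cases i <;> norm_num)
      · exact isLatticePt_of_int _ ![-1,-1,-1] (by intro i; fin_cases i <;> norm_num)
    · ext x
      simp only [Set.mem_inter_iff, Set.mem_setOf_eq, Set.mem_iInter, lastCoord_eq,
        Finset.mem_insert, Finset.mem_singleton, octa_eq]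
      constructor
      · rintro ⟨hx, h2⟩
        refine ⟨h2, ?_⟩
        have e2 : |x 2| = x 2 := abs_of_nonneg h2
        intro n hn
        rcases hn with h|h|h|h <;> subst h <;> rw [sum3] <;> norm_num <;>
          (rcases abs_cases (x 0) with ⟨e0,f0⟩|⟨e0,f0⟩ <;>
           rcases abs_cases (x 1) with ⟨e1,f1⟩|⟨e1,f1⟩ <;> linarith)
      · rintro ⟨h2, h⟩
        have k0 := h ![1,1,-1] (by simp)
        have k1 := h ![1,-1,-1] (by simp)
        have k2 := h ![-1,1,-1] (by simp)
        have k3 := h ![-1,-1,-1] (by simp)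
        rw [sum3] at k0 k1 k2 k3
        norm_num at k0 k1 k2 k3
        refine ⟨?_, h2⟩
        have h2' : |x 2| = x 2 := abs_of_nonneg h2
        rcases abs_cases (x 0) with ⟨e0,_⟩|⟨e0,_⟩ <;> rcases abs_cases (x 1) with ⟨e1,_⟩|⟨e1,_⟩ <;>
          linarith
  · rw [proj_eq]
    exact diamond_reflexive
lemma mem_image_invol {α : Type*} {f : α → α} (hf : ∀ y, f (f y) = y) (S : Set α) (x : α) :
    x ∈ f '' S ↔ f x ∈ S := by
  constructor
  · rintro ⟨y, hy, rfl⟩; rwa [hf]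
  · intro h; exact ⟨f x, h, hf x⟩

lemma unimodular_id : UnimodularMap (k := 3) id := by
  refine ⟨1, by simp, ?_⟩
  intro x
  rw [Matrix.map_one _ Int.cast_zero Int.cast_one, Matrix.one_mulVec]
  rfl

/-- The sign-swap map exchanging coordinates `i` and `2` with sign `ε`. -/
def tr (i : Fin 3) (ε : ℝ) (x : Fin 3 → ℝ) : Fin 3 → ℝ :=
  fun j => if j = 2 then ε * x i else if j = i then ε * x 2 else x j

lemma tr_invol (i : Fin 3) (ε : ℝ) (hε : ε = 1 ∨ ε = -1) (x : Fin 3 → ℝ) :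
    tr i ε (tr i ε x) = x := by
  funext j
  rcases hε with rfl | rfl <;> fin_cases i <;> fin_cases j <;>
    simp [tr, fmk0, fmk1, fmk2]

lemma tr_l1 (i : Fin 3) (ε : ℝ) (hε : ε = 1 ∨ ε = -1) (x : Fin 3 → ℝ) :
    |tr i ε x 0| + |tr i ε x 1| + |tr i ε x 2| = |x 0| + |x 1| + |x 2| := by
  rcases hε with rfl | rfl <;> fin_cases i <;>
    simp [tr, fmk0, fmk1, fmk2, abs_neg] <;> ring

lemma tr_mem_octa (i : Fin 3) (ε : ℝ) (hε : ε = 1 ∨ ε = -1) (x : Fin 3 → ℝ) :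
    tr i ε x ∈ octa ↔ x ∈ octa := by
  rw [octa_eq, Set.mem_setOf_eq, Set.mem_setOf_eq, tr_l1 i ε hε]

lemma tr_unimodular (i : Fin 3) (ε : ℝ) (hε : ε = 1 ∨ ε = -1) :
    UnimodularMap (tr i ε) := by
  rcases hε with rfl | rfl
  · refine ⟨Matrix.of fun j k =>
      if j = 2 then (if k = i then (1:ℤ) else 0)
      else if j = i then (if k = 2 then 1 else 0)
      else if k = j then 1 else 0, ?_, ?_⟩
    · rw [Matrix.det_fin_three]
      fin_cases i <;> rw [Int.isUnit_iff] <;> decide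
    · intro x
      funext j
      simp only [Matrix.mulVec, dotProduct, Matrix.map_apply, Matrix.of_apply,
        Fin.sum_univ_three]
      fin_cases i <;> fin_cases j <;> simp [tr, fmk0, fmk1, fmk2]
  · refine ⟨Matrix.of fun j k =>
      if j = 2 then (if k = i then (-1:ℤ) else 0)
      else if j = i then (if k = 2 then -1 else 0)
      else if k = j then 1 else 0, ?_, ?_⟩
    · rw [Matrix.det_fin_three]
      fin_cases i <;> rw [Int.isUnit_iff] <;> decide
    · intro x
      funext j
      simp only [Matrix.mulVec, dotProduct, Matrix.map_apply, Matrix.of_apply,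
        Fin.sum_univ_three]
      fin_cases i <;> fin_cases j <;> simp [tr, fmk0, fmk1, fmk2]

lemma tr_image_octa (i : Fin 3) (ε : ℝ) (hε : ε = 1 ∨ ε = -1) :
    tr i ε '' octa = octa := by
  ext x
  rw [mem_image_invol (tr_invol i ε hε), tr_mem_octa i ε hε]

lemma tr_sum (i : Fin 3) (ε : ℝ) (m : Fin 3 → ℤ) (hm0 : ∀ j, j ≠ i → m j = 0)
    (x : Fin 3 → ℝ) : (∑ k, (m k : ℝ) * tr i ε x k) = (m i : ℝ) * (ε * x 2) := by
  rw [sum3]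
  fin_cases i
  · rw [hm0 1 (by decide), hm0 2 (by decide)]; simp [tr, fmk0]
  · rw [hm0 0 (by decide), hm0 2 (by decide)]; simp [tr, fmk1]
  · rw [hm0 0 (by decide), hm0 1 (by decide)]; simp [tr, fmk2]
lemma sum_e3 (x : Fin 3 → ℝ) : (∑ k, ((![0,0,1] : Fin 3 → ℤ) k : ℝ) * x k) = x 2 := by
  rw [sum3]; norm_num

lemma slice_e3 : octa ∩ {x : Fin 3 → ℝ | ∑ k, ((![0,0,1] : Fin 3 → ℤ) k : ℝ) * x k = 0}
    = (fun v => (Fin.snoc v 0 : Fin (2+1) → ℝ)) ''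
        (convexHull ℝ ({![1,0], ![-1,0], ![0,1], ![0,-1]} : Set (Fin 2 → ℝ))) := by
  rw [square_eq]
  ext x
  constructor
  · rintro ⟨hx, h0⟩
    rw [octa_eq] at hx
    simp only [Set.mem_setOf_eq, sum_e3] at hx h0
    have habs : |x 2| = 0 := by rw [h0]; simp
    refine ⟨![x 0, x 1], ?_, ?_⟩
    · simp only [Set.mem_setOf_eq]
      norm_num
      linarith
    · show (Fin.snoc ![x 0, x 1] 0 : Fin 3 → ℝ) = x
      rw [snoc3]
      funext j
      fin_cases j <;> simp only [fmk0, fmk1, fmk2] <;> norm_num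
      exact h0.symm
  · rintro ⟨y, hy, rfl⟩
    simp only [Set.mem_setOf_eq] at hy
    constructor
    · rw [octa_eq]
      simp only [Set.mem_setOf_eq, snoc3]
      norm_num
      linarith
    · simp only [Set.mem_setOf_eq, sum_e3, snoc3]
      norm_num

lemma halfset_ge : {x : Fin 3 → ℝ | 0 ≤ ∑ k, ((![0,0,1] : Fin 3 → ℤ) k : ℝ) * x k}
    = {x : Fin 3 → ℝ | 0 ≤ x 2} := by
  ext x; simp [sum_e3]

lemma B_eq : tr 2 (-1) '' (octa ∩ {x | ∑ k, ((![0,0,1] : Fin 3 → ℤ) k : ℝ) * x k ≤ 0})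
    = octa ∩ {x : Fin 3 → ℝ | 0 ≤ x 2} := by
  ext z
  rw [mem_image_invol (tr_invol 2 (-1) (Or.inr rfl))]
  simp only [Set.mem_inter_iff, Set.mem_setOf_eq, sum_e3]
  have e : tr 2 (-1) z 2 = -(z 2) := by simp [tr]
  rw [e]
  exact and_congr (tr_mem_octa 2 (-1) (Or.inr rfl) z) (by constructor <;> intro <;> linarith)

lemma oct_decomp_e3 : OctDecomp ![0,0,1] := by
  refine ⟨?_,
    ⟨id, convexHull ℝ ({![1,0], ![-1,0], ![0,1], ![0,-1]} : Set (Fin 2 → ℝ)),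
      unimodular_id, diamond_reflexive, by rw [Set.image_id]; exact slice_e3⟩,
    ⟨id, unimodular_id, ?_⟩,
    ⟨tr 2 (-1), tr_unimodular 2 (-1) (Or.inr rfl), ?_⟩⟩
  · intro h
    have := congrFun h 2
    norm_num at this
  · rw [Set.image_id, halfset_ge]
    exact top_half
  · rw [B_eq]
    exact top_half
lemma snoc_linear : IsLinearMap ℝ (fun v : Fin 2 → ℝ => (Fin.snoc v 0 : Fin 3 → ℝ)) := by
  constructor
  · intro a b
    rw [snoc3, snoc3, snoc3]
    funext j
    fin_cases j <;> simp
  · intro c a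
    rw [snoc3, snoc3]
    funext j
    fin_cases j <;> simp

lemma lattice_snoc {y : Fin 2 → ℝ} (hy : IsLatticePt y) :
    IsLatticePt (Fin.snoc y 0 : Fin 3 → ℝ) := by
  rw [snoc3]
  intro i
  fin_cases i
  · simpa using hy 0
  · simpa using hy 1
  · exact ⟨0, by norm_num⟩

lemma unimodular_inverse {φ : (Fin 3 → ℝ) → (Fin 3 → ℝ)} (h : UnimodularMap φ) :
    ∃ ψ : (Fin 3 → ℝ) → (Fin 3 → ℝ), (∀ x, ψ (φ x) = x) ∧
      (∀ x, IsLatticePt x → IsLatticePt (ψ x)) ∧ IsLinearMap ℝ ψ := by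
  obtain ⟨M, hdet, hφ⟩ := h
  set N := M⁻¹ with hN
  have hNM : N * M = 1 := Matrix.nonsing_inv_mul M hdet
  have hmap : (N.map (fun z : ℤ => (z:ℝ))) * (M.map (fun z : ℤ => (z:ℝ))) = 1 := by
    have : ((N * M).map (fun z : ℤ => (z:ℝ)))
        = (N.map (fun z : ℤ => (z:ℝ))) * (M.map (fun z : ℤ => (z:ℝ))) :=
      Matrix.map_mul (f := Int.castRingHom ℝ)
    rw [← this, hNM]
    exact Matrix.map_one _ Int.cast_zero Int.cast_one
  refine ⟨fun x => (N.map (fun z : ℤ => (z:ℝ))).mulVec x, ?_, ?_, ?_⟩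
  · intro x
    rw [hφ]
    show (N.map fun z : ℤ => (z:ℝ)) *ᵥ ((M.map fun z : ℤ => (z:ℝ)) *ᵥ x) = x
    rw [Matrix.mulVec_mulVec, hmap, Matrix.one_mulVec]
  · intro x hx
    choose n hn using hx
    intro j
    refine ⟨∑ k, N j k * n k, ?_⟩
    show (N.map fun z : ℤ => (z:ℝ)).mulVec x j = _
    have : (N.map (fun z : ℤ => (z:ℝ))).mulVec x j = ∑ k, (N j k : ℝ) * x k := by
      simp [Matrix.mulVec, dotProduct, Matrix.map_apply]
    rw [this]
    simp_rw [hn]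
    push_cast
    rfl
  · exact ⟨fun a b => (N.map _).mulVecLin.map_add a b, fun c a => (N.map _).mulVecLin.map_smul c a⟩

lemma int_key (a b c p q r : ℤ) (habs : |a| + |b| + |c| ≤ 1)
    (heq : p * a + q * b + r * c = 0) (hp : p ≠ 0) (hq : q ≠ 0) : a = 0 := by
  by_contra h
  have hbc : b = 0 ∧ c = 0 := by
    rcases abs_cases a with ⟨e1,f1⟩|⟨e1,f1⟩ <;> rcases abs_cases b with ⟨e2,f2⟩|⟨e2,f2⟩ <;>
      rcases abs_cases c with ⟨e3,f3⟩|⟨e3,f3⟩ <;> omega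
  rw [hbc.1, hbc.2] at heq
  simp only [mul_zero, add_zero] at heq
  rcases mul_eq_zero.mp heq with h'|h'
  · exact hp h'
  · exact h h'

lemma lattice_in_octa {x : Fin 3 → ℝ} (hx : x ∈ octa) (hl : IsLatticePt x)
    {i j : Fin 3} (hij : j ≠ i) {m : Fin 3 → ℤ} (hmi : m i ≠ 0) (hmj : m j ≠ 0)
    (hsum : ∑ k, (m k : ℝ) * x k = 0) : x i = 0 := by
  obtain ⟨n0, e0⟩ := hl 0
  obtain ⟨n1, e1⟩ := hl 1
  obtain ⟨n2, e2⟩ := hl 2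
  rw [octa_eq] at hx
  simp only [Set.mem_setOf_eq, e0, e1, e2] at hx
  have habs : |n0| + |n1| + |n2| ≤ 1 := by
    have : ((|n0| + |n1| + |n2| : ℤ) : ℝ) ≤ ((1:ℤ):ℝ) := by push_cast [Int.cast_abs] at hx ⊢; linarith
    exact_mod_cast this
  rw [sum3, e0, e1, e2] at hsum
  have heq : m 0 * n0 + m 1 * n1 + m 2 * n2 = 0 := by exact_mod_cast hsum
  fin_cases i <;> fin_cases j <;> simp only [fmk0, fmk1, fmk2] at hij ⊢ <;> first
    | exact absurd rfl hij
    | (rw [e0]; exact_mod_cast int_key n0 n1 n2 (m 0) (m 1) (m 2) (by linarith) (by linarith) hmi hmj)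
    | (rw [e0]; exact_mod_cast int_key n0 n2 n1 (m 0) (m 2) (m 1) (by linarith) (by linarith) hmi hmj)
    | (rw [e1]; exact_mod_cast int_key n1 n0 n2 (m 1) (m 0) (m 2) (by linarith) (by linarith) hmi hmj)
    | (rw [e1]; exact_mod_cast int_key n1 n2 n0 (m 1) (m 2) (m 0) (by linarith) (by linarith) hmi hmj)
    | (rw [e2]; exact_mod_cast int_key n2 n0 n1 (m 2) (m 0) (m 1) (by linarith) (by linarith) hmi hmj)
    | (rw [e2]; exact_mod_cast int_key n2 n1 n0 (m 2) (m 1) (m 0) (by linarith) (by linarith) hmi hmj)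
lemma abs_bound (A B : ℝ) (hA : A ≠ 0) (hd : 0 < |A| + |B|) :
    |B / (|A| + |B|)| + |A / (|A| + |B|)| ≤ 1 := by
  rw [abs_div, abs_div, abs_of_pos hd, ← add_div, div_le_one hd]
  linarith

lemma no_two {m : Fin 3 → ℤ} (i j : Fin 3) (hji : j ≠ i) (hi : m i ≠ 0) (hj : m j ≠ 0)
    (hsub : (octa ∩ {x | ∑ k, (m k : ℝ) * x k = 0}) ⊆ {x : Fin 3 → ℝ | x i = 0}) : False := by
  fin_cases i <;> fin_cases j <;> (try exact absurd rfl hji)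
  · have hA : (m 0 : ℝ) ≠ 0 := Int.cast_ne_zero.mpr hi
    have hB : (m 1 : ℝ) ≠ 0 := Int.cast_ne_zero.mpr hj
    have hd : 0 < |(m 0 : ℝ)| + |(m 1 : ℝ)| := by
      have h1 := abs_pos.mpr hA
      have h2 := abs_nonneg (m 1 : ℝ)
      linarith
    have hmem : (![(m 1 : ℝ) / (|(m 0 : ℝ)| + |(m 1 : ℝ)|), -((m 0 : ℝ) / (|(m 0 : ℝ)| + |(m 1 : ℝ)|)), 0] : Fin 3 → ℝ) ∈ octa ∩ {x | ∑ k, (m k : ℝ) * x k = 0} := by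
      constructor
      · rw [octa_eq]
        simp only [Set.mem_setOf_eq]
        norm_num
        linarith [abs_bound (m 0 : ℝ) (m 1 : ℝ) hA hd]
      · show (∑ k, (m k : ℝ) * ![(m 1 : ℝ) / (|(m 0 : ℝ)| + |(m 1 : ℝ)|), -((m 0 : ℝ) / (|(m 0 : ℝ)| + |(m 1 : ℝ)|)), 0] k) = 0
        rw [sum3]
        norm_num
        field_simp
        ring
    have hz := hsub hmem
    simp only [Set.mem_setOf_eq, fmk0, fmk1, fmk2] at hz
    norm_num at hz
    rcases hz with h | h
    · exact hj h
    · exact hd.ne' h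
  · have hA : (m 0 : ℝ) ≠ 0 := Int.cast_ne_zero.mpr hi
    have hB : (m 2 : ℝ) ≠ 0 := Int.cast_ne_zero.mpr hj
    have hd : 0 < |(m 0 : ℝ)| + |(m 2 : ℝ)| := by
      have h1 := abs_pos.mpr hA
      have h2 := abs_nonneg (m 2 : ℝ)
      linarith
    have hmem : (![(m 2 : ℝ) / (|(m 0 : ℝ)| + |(m 2 : ℝ)|), 0, -((m 0 : ℝ) / (|(m 0 : ℝ)| + |(m 2 : ℝ)|))] : Fin 3 → ℝ) ∈ octa ∩ {x | ∑ k, (m k : ℝ) * x k = 0} := by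
      constructor
      · rw [octa_eq]
        simp only [Set.mem_setOf_eq]
        norm_num
        linarith [abs_bound (m 0 : ℝ) (m 2 : ℝ) hA hd]
      · show (∑ k, (m k : ℝ) * ![(m 2 : ℝ) / (|(m 0 : ℝ)| + |(m 2 : ℝ)|), 0, -((m 0 : ℝ) / (|(m 0 : ℝ)| + |(m 2 : ℝ)|))] k) = 0
        rw [sum3]
        norm_num
        field_simp
        ring
    have hz := hsub hmem
    simp only [Set.mem_setOf_eq, fmk0, fmk1, fmk2] at hz
    norm_num at hz
    rcases hz with h | h
    · exact hj h
    · exact hd.ne' h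
  · have hA : (m 1 : ℝ) ≠ 0 := Int.cast_ne_zero.mpr hi
    have hB : (m 0 : ℝ) ≠ 0 := Int.cast_ne_zero.mpr hj
    have hd : 0 < |(m 1 : ℝ)| + |(m 0 : ℝ)| := by
      have h1 := abs_pos.mpr hA
      have h2 := abs_nonneg (m 0 : ℝ)
      linarith
    have hmem : (![-((m 1 : ℝ) / (|(m 1 : ℝ)| + |(m 0 : ℝ)|)), (m 0 : ℝ) / (|(m 1 : ℝ)| + |(m 0 : ℝ)|), 0] : Fin 3 → ℝ) ∈ octa ∩ {x | ∑ k, (m k : ℝ) * x k = 0} := by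
      constructor
      · rw [octa_eq]
        simp only [Set.mem_setOf_eq]
        norm_num
        linarith [abs_bound (m 1 : ℝ) (m 0 : ℝ) hA hd]
      · show (∑ k, (m k : ℝ) * ![-((m 1 : ℝ) / (|(m 1 : ℝ)| + |(m 0 : ℝ)|)), (m 0 : ℝ) / (|(m 1 : ℝ)| + |(m 0 : ℝ)|), 0] k) = 0
        rw [sum3]
        norm_num
        field_simp
        ring
    have hz := hsub hmem
    simp only [Set.mem_setOf_eq, fmk0, fmk1, fmk2] at hz
    norm_num at hz
    rcases hz with h | h
    · exact hj h
    · exact hd.ne' h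
  · have hA : (m 1 : ℝ) ≠ 0 := Int.cast_ne_zero.mpr hi
    have hB : (m 2 : ℝ) ≠ 0 := Int.cast_ne_zero.mpr hj
    have hd : 0 < |(m 1 : ℝ)| + |(m 2 : ℝ)| := by
      have h1 := abs_pos.mpr hA
      have h2 := abs_nonneg (m 2 : ℝ)
      linarith
    have hmem : (![0, (m 2 : ℝ) / (|(m 1 : ℝ)| + |(m 2 : ℝ)|), -((m 1 : ℝ) / (|(m 1 : ℝ)| + |(m 2 : ℝ)|))] : Fin 3 → ℝ) ∈ octa ∩ {x | ∑ k, (m k : ℝ) * x k = 0} := by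
      constructor
      · rw [octa_eq]
        simp only [Set.mem_setOf_eq]
        norm_num
        linarith [abs_bound (m 1 : ℝ) (m 2 : ℝ) hA hd]
      · show (∑ k, (m k : ℝ) * ![0, (m 2 : ℝ) / (|(m 1 : ℝ)| + |(m 2 : ℝ)|), -((m 1 : ℝ) / (|(m 1 : ℝ)| + |(m 2 : ℝ)|))] k) = 0
        rw [sum3]
        norm_num
        field_simp
        ring
    have hz := hsub hmem
    simp only [Set.mem_setOf_eq, fmk0, fmk1, fmk2] at hz
    norm_num at hz
    rcases hz with h | h
    · exact hj h
    · exact hd.ne' h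
  · have hA : (m 2 : ℝ) ≠ 0 := Int.cast_ne_zero.mpr hi
    have hB : (m 0 : ℝ) ≠ 0 := Int.cast_ne_zero.mpr hj
    have hd : 0 < |(m 2 : ℝ)| + |(m 0 : ℝ)| := by
      have h1 := abs_pos.mpr hA
      have h2 := abs_nonneg (m 0 : ℝ)
      linarith
    have hmem : (![-((m 2 : ℝ) / (|(m 2 : ℝ)| + |(m 0 : ℝ)|)), 0, (m 0 : ℝ) / (|(m 2 : ℝ)| + |(m 0 : ℝ)|)] : Fin 3 → ℝ) ∈ octa ∩ {x | ∑ k, (m k : ℝ) * x k = 0} := by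
      constructor
      · rw [octa_eq]
        simp only [Set.mem_setOf_eq]
        norm_num
        linarith [abs_bound (m 2 : ℝ) (m 0 : ℝ) hA hd]
      · show (∑ k, (m k : ℝ) * ![-((m 2 : ℝ) / (|(m 2 : ℝ)| + |(m 0 : ℝ)|)), 0, (m 0 : ℝ) / (|(m 2 : ℝ)| + |(m 0 : ℝ)|)] k) = 0
        rw [sum3]
        norm_num
        field_simp
        ring
    have hz := hsub hmem
    simp only [Set.mem_setOf_eq, fmk0, fmk1, fmk2] at hz
    norm_num at hz
    rcases hz with h | h
    · exact hj h
    · exact hd.ne' h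
  · have hA : (m 2 : ℝ) ≠ 0 := Int.cast_ne_zero.mpr hi
    have hB : (m 1 : ℝ) ≠ 0 := Int.cast_ne_zero.mpr hj
    have hd : 0 < |(m 2 : ℝ)| + |(m 1 : ℝ)| := by
      have h1 := abs_pos.mpr hA
      have h2 := abs_nonneg (m 1 : ℝ)
      linarith
    have hmem : (![0, -((m 2 : ℝ) / (|(m 2 : ℝ)| + |(m 1 : ℝ)|)), (m 1 : ℝ) / (|(m 2 : ℝ)| + |(m 1 : ℝ)|)] : Fin 3 → ℝ) ∈ octa ∩ {x | ∑ k, (m k : ℝ) * x k = 0} := by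
      constructor
      · rw [octa_eq]
        simp only [Set.mem_setOf_eq]
        norm_num
        linarith [abs_bound (m 2 : ℝ) (m 1 : ℝ) hA hd]
      · show (∑ k, (m k : ℝ) * ![0, -((m 2 : ℝ) / (|(m 2 : ℝ)| + |(m 1 : ℝ)|)), (m 1 : ℝ) / (|(m 2 : ℝ)| + |(m 1 : ℝ)|)] k) = 0
        rw [sum3]
        norm_num
        field_simp
        ring
    have hz := hsub hmem
    simp only [Set.mem_setOf_eq, fmk0, fmk1, fmk2] at hz
    norm_num at hz
    rcases hz with h | h
    · exact hj h
    · exact hd.ne' h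
lemma unique_axis {m : Fin 3 → ℤ} (h : OctDecomp m) : ∃ i, m i ≠ 0 ∧ ∀ j, j ≠ i → m j = 0 := by
  obtain ⟨hm, ⟨φ, Q, hφ, hQ, hglue⟩, -, -⟩ := h
  have hex : ∃ i, m i ≠ 0 := by
    by_contra hc
    push_neg at hc
    exact hm (funext fun k => hc k)
  obtain ⟨i, hi⟩ := hex
  refine ⟨i, hi, ?_⟩
  by_contra hc
  push_neg at hc
  obtain ⟨j, hji, hj⟩ := hc
  obtain ⟨ψ, hinv, hlat, hlin⟩ := unimodular_inverse hφ
  obtain ⟨⟨V, hVlat, hQeq⟩, -, -⟩ := hQ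
  set sl : Set (Fin 3 → ℝ) := octa ∩ {x | ∑ k, (m k : ℝ) * x k = 0} with hsl
  have h1 : sl = ψ '' ((fun v => (Fin.snoc v 0 : Fin (2+1) → ℝ)) '' Q) := by
    rw [← hglue]
    ext z
    constructor
    · intro hz
      exact ⟨φ z, Set.mem_image_of_mem φ hz, hinv z⟩
    · rintro ⟨w, ⟨u, hu, rfl⟩, rfl⟩
      rwa [hinv u]
  set W : Set (Fin 3 → ℝ) := ψ '' ((fun v => (Fin.snoc v 0 : Fin 3 → ℝ)) '' (V : Set (Fin 2 → ℝ)))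
    with hW
  have h2 : sl = convexHull ℝ W := by
    rw [h1, hQeq, snoc_linear.image_convexHull, hlin.image_convexHull]
  have hWsl : W ⊆ sl := by
    rw [h2]
    exact subset_convexHull ℝ W
  have hWlat : ∀ w ∈ W, IsLatticePt w := by
    rintro w ⟨u, ⟨v, hv, rfl⟩, rfl⟩
    exact hlat _ (lattice_snoc (hVlat v hv))
  have hW0 : ∀ w ∈ W, w i = 0 := by
    intro w hw
    obtain ⟨hwo, hwz⟩ := hWsl hw
    exact lattice_in_octa hwo (hWlat w hw) hji hi hj hwz
  have hsub : sl ⊆ {x : Fin 3 → ℝ | x i = 0} := by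
    rw [h2]
    exact convexHull_min hW0 (convex_hyperplane (coord_linear i) 0)
  exact no_two i j hji hi hj hsub
lemma tr_image_half (i : Fin 3) (ε : ℝ) (hε : ε = 1 ∨ ε = -1) (m : Fin 3 → ℤ)
    (hmε : 0 < (m i : ℝ) * ε) (hm0 : ∀ j, j ≠ i → m j = 0) :
    tr i ε '' (octa ∩ {x | 0 ≤ ∑ k, (m k : ℝ) * x k}) = octa ∩ {x : Fin 3 → ℝ | 0 ≤ x 2} := by
  ext z
  rw [mem_image_invol (tr_invol i ε hε)]
  simp only [Set.mem_inter_iff, Set.mem_setOf_eq]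
  rw [tr_sum i ε m hm0 z]
  refine and_congr (tr_mem_octa i ε hε z) ?_
  have e : (m i : ℝ) * (ε * z 2) = ((m i : ℝ) * ε) * z 2 := by ring
  rw [e]
  constructor
  · intro h; nlinarith
  · intro h; exact mul_nonneg hmε.le h

/-- The octahedron has a decomposition into two tops glued along a common
reflexive polygon, namely the split into the halves `x₃ ≥ 0` and `x₃ ≤ 0` (each half a
top with square reflexive boundary), and this decomposition is unique up to a lattice
isomorphism preserving the octahedron. -/
theorem stmt15 :
    (IsTopPoly (k := 2) (octa ∩ {x | 0 ≤ x 2}) ∧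
      projInit (k := 2) '' ((octa ∩ {x | 0 ≤ x 2}) ∩ {x | lastCoord (k := 2) x = 0})
        = convexHull ℝ ({![1,0], ![-1,0], ![0,1], ![0,-1]} : Set (Fin 2 → ℝ)) ∧
      OctDecomp ![0,0,1]) ∧
    (∀ m : Fin 3 → ℤ, OctDecomp m →
      ∃ φ : (Fin 3 → ℝ) → (Fin 3 → ℝ), UnimodularMap φ ∧ φ '' octa = octa ∧
        φ '' (octa ∩ {x | 0 ≤ ∑ i, (m i : ℝ) * x i}) = octa ∩ {x | 0 ≤ x 2}) := by
  refine ⟨⟨top_half, proj_eq, oct_decomp_e3⟩, ?_⟩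
  intro m hm
  obtain ⟨i, hi, hj⟩ := unique_axis hm
  by_cases hpos : 0 < m i
  · refine ⟨tr i 1, tr_unimodular i 1 (Or.inl rfl), tr_image_octa i 1 (Or.inl rfl), ?_⟩
    refine tr_image_half i 1 (Or.inl rfl) m ?_ hj
    have h' : (0:ℝ) < (m i : ℝ) := by exact_mod_cast hpos
    linarith
  · have hneg : m i < 0 := lt_of_le_of_ne (not_lt.mp hpos) hi
    refine ⟨tr i (-1), tr_unimodular i (-1) (Or.inr rfl), tr_image_octa i (-1) (Or.inr rfl), ?_⟩
    refine tr_image_half i (-1) (Or.inr rfl) m ?_ hj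
    have h' : (m i : ℝ) < 0 := by exact_mod_cast hneg
    nlinarith

end SemistableTops
end
end
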